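/- arXiv:0906.1178 — 7 statements merged into one kernel-verified Lean document; each statement's English description precedes it below -/
import Mathlib

section
/- Let G be a subgroup of the group of isometries of the Euclidean plane ℝ² that is infinite, discrete, and affinely irreducible. Then every rotation contained in the special group of G has finite order, and this order is 2, 3, 4, or 6. -/
/-
The translations of `G` form an additive subgroup `T` of the plane that is stable under the
linear parts of `G`. It is nonzero: otherwise taking linear parts is injective on `G`, so the
orientation-preserving part of `G` (of index at most 2, hence infinite) is abelian like `SO(2)`;
it then fixes the unique fixed point of any of its nontrivial elements, and discreteness makes
it finite. By irreducibility `T` spans the plane, and by discreteness it is a lattice. A rotation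
by `θ` preserving a lattice has integer trace `t = 2 cos θ`, so `z = e^{iθ}` satisfies
`z² - t z + 1 = 0` with `|t| ≤ 2`, and each of the five possible values of `t` forces `z = 1`
or `orderOf z ∈ {2, 3, 4, 6}`.
-/

noncomputable section

abbrev E2 : Type := EuclideanSpace ℝ (Fin 2)

open Module

section Field

variable {K : Type*} [Field K] [CharZero K] {z : K}

theorem orderOf_eq_three_of_sq_add_add_one (hz : z ^ 2 + z + 1 = 0) : orderOf z = 3 := by
  refine orderOf_eq_prime (by linear_combination (z - 1) * hz) ?_
  rintro rfl
  norm_num at hz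

theorem orderOf_eq_four_of_sq_eq_neg_one (hz : z ^ 2 = -1) : orderOf z = 4 :=
  orderOf_eq_prime_pow (p := 2) (n := 1) (by norm_num [hz])
    (by rw [show 2 ^ (1 + 1) = 2 * 2 by rfl, pow_mul, hz]; norm_num)

theorem orderOf_eq_six_of_sq_sub_add_one (hz : z ^ 2 - z + 1 = 0) : orderOf z = 6 := by
  have h3 : orderOf (-z) = 3 := orderOf_eq_three_of_sq_add_add_one (by linear_combination hz)
  have h2 : orderOf (-1 : K) = 2 := by simp [orderOf_neg_one, ringChar.eq_zero]
  have := (Commute.neg_one_left (-z)).orderOf_mul_eq_mul_orderOf_of_coprime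
    (by rw [h2, h3]; norm_num)
  rwa [neg_one_mul, neg_neg, h2, h3] at this

theorem orderOf_mem_of_sq_sub_mul_add_one_eq_zero {t : ℤ} (ht : |t| ≤ 2) (hz1 : z ≠ 1)
    (hz : z ^ 2 - t * z + 1 = 0) : orderOf z ∈ ({2, 3, 4, 6} : Set ℕ) := by
  obtain ⟨ht₁, ht₂⟩ := abs_le.mp ht
  interval_cases t <;> push_cast at hz
  · have hz' : z = -1 := by
      have : (z + 1) ^ 2 = 0 := by linear_combination hz
      linear_combination pow_eq_zero_iff two_ne_zero |>.mp this
    simp [hz', orderOf_neg_one, ringChar.eq_zero]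
  · simp [orderOf_eq_three_of_sq_add_add_one (by linear_combination hz)]
  · simp [orderOf_eq_four_of_sq_eq_neg_one (by linear_combination hz)]
  · simp [orderOf_eq_six_of_sq_sub_add_one (by linear_combination hz)]
  · have : (z - 1) ^ 2 = 0 := by linear_combination hz
    exact absurd (sub_eq_zero.mp (pow_eq_zero_iff two_ne_zero |>.mp this)) hz1

end Field

theorem Complex.sq_sub_two_mul_re_mul_add_one_eq_zero {z : ℂ} (hz : ‖z‖ = 1) :
    z ^ 2 - (2 * z.re : ℝ) * z + 1 = 0 := by
  have h := Complex.mul_conj z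
  rw [Complex.normSq_eq_norm_sq, hz] at h
  have hre : ((2 * z.re : ℝ) : ℂ) = z + (starRingEnd ℂ) z := by rw [Complex.add_conj]
  push_cast at h
  rw [hre]
  linear_combination -h

namespace Real.Angle

theorem toCircle_nsmul (θ : Real.Angle) (n : ℕ) : (n • θ).toCircle = θ.toCircle ^ n := by
  induction n with
  | zero => simp
  | succ n ih => rw [succ_nsmul, toCircle_add, ih, pow_succ]

theorem toCircle_eq_one_iff {θ : Real.Angle} : θ.toCircle = 1 ↔ θ = 0 := by
  refine ⟨fun h => ?_, fun h => h ▸ toCircle_zero⟩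
  rw [← arg_toCircle θ, h, Circle.coe_one, Complex.arg_one, coe_zero]

end Real.Angle

namespace Orientation

variable {V : Type*} [NormedAddCommGroup V] [InnerProductSpace ℝ V] [Fact (finrank ℝ V = 2)]
  (o : Orientation ℝ V (Fin 2))

theorem rotation_mul_rotation (θ φ : Real.Angle) :
    o.rotation θ * o.rotation φ = o.rotation (θ + φ) :=
  o.rotation_trans φ θ

theorem rotation_pow (θ : Real.Angle) (n : ℕ) : o.rotation θ ^ n = o.rotation (n • θ) := by
  induction n with
  | zero => rw [pow_zero, zero_smul, rotation_zero]; rfl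
  | succ n ih => rw [pow_succ, ih, rotation_mul_rotation, succ_nsmul]

theorem rotation_eq_one_iff {θ : Real.Angle} : o.rotation θ = 1 ↔ θ = 0 := by
  have : Nontrivial V := nontrivial_of_finrank_eq_succ (@Fact.out (finrank ℝ V = 2) _)
  obtain ⟨x, hx⟩ := exists_ne (0 : V)
  refine ⟨fun h => ?_, fun h => by rw [h, rotation_zero]; rfl⟩
  simpa [hx] using (o.rotation_eq_self_iff x θ).mp (by rw [h]; rfl)

theorem orderOf_rotation (θ : Real.Angle) :
    orderOf (o.rotation θ) = orderOf (θ.toCircle : ℂ) := by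
  refine orderOf_eq_orderOf_iff.mpr fun n => ?_
  rw [rotation_pow, rotation_eq_one_iff, ← Circle.coe_pow, ← Real.Angle.toCircle_nsmul,
    Circle.coe_eq_one, Real.Angle.toCircle_eq_one_iff]

theorem trace_rotation (θ : Real.Angle) :
    LinearMap.trace ℝ V (o.rotation θ).toLinearMap = 2 * θ.cos := by
  have : Nontrivial V := nontrivial_of_finrank_eq_succ (@Fact.out (finrank ℝ V = 2) _)
  obtain ⟨x, hx⟩ := exists_ne (0 : V)
  rw [o.rotation_eq_matrix_toLin θ hx,
    LinearMap.trace_eq_matrix_trace ℝ (o.basisRightAngleRotation x hx),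
    LinearMap.toMatrix_toLin, Matrix.trace_fin_two]
  simp [two_mul]

theorem exists_eq_rotation_of_det_eq_one {A : V ≃ₗᵢ[ℝ] V}
    (hA : LinearEquiv.det A.toLinearEquiv = 1) : ∃ θ, A = o.rotation θ :=
  o.exists_linearIsometryEquiv_eq_of_det_pos (by rw [← LinearEquiv.coe_det, hA]; exact one_pos)

end Orientation

namespace LinearIsometryEquiv

theorem det_eq_one_or_eq_neg_one {V : Type*} [NormedAddCommGroup V] [InnerProductSpace ℝ V]
    [FiniteDimensional ℝ V] (A : V ≃ₗᵢ[ℝ] V) :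
    LinearEquiv.det A.toLinearEquiv = 1 ∨ LinearEquiv.det A.toLinearEquiv = -1 := by
  have h : |LinearMap.det A.toLinearMap| = 1 := by
    rw [← Real.norm_eq_abs, ← LinearMap.normDet_eq_norm_det]
    exact A.toLinearIsometry.normDet_eq_one
  rw [← LinearEquiv.coe_det] at h
  simpa [Units.ext_iff] using abs_eq_abs.mp (h.trans abs_one.symm)

attribute [local instance] FiniteDimensional.of_fact_finrank_eq_two

variable {V : Type*} [NormedAddCommGroup V] [InnerProductSpace ℝ V] [Fact (finrank ℝ V = 2)]
  {A B : V ≃ₗᵢ[ℝ] V}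

theorem commute_of_det_eq_one (hA : LinearEquiv.det A.toLinearEquiv = 1)
    (hB : LinearEquiv.det B.toLinearEquiv = 1) : Commute A B := by
  let o : Orientation ℝ V (Fin 2) := (finBasisOfFinrankEq ℝ V Fact.out).orientation
  obtain ⟨θ, rfl⟩ := o.exists_eq_rotation_of_det_eq_one hA
  obtain ⟨φ, rfl⟩ := o.exists_eq_rotation_of_det_eq_one hB
  rw [Commute, SemiconjBy, o.rotation_mul_rotation, o.rotation_mul_rotation, add_comm]

theorem eq_zero_of_apply_eq_self_of_det_eq_one (hA : LinearEquiv.det A.toLinearEquiv = 1)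
    (hA1 : A ≠ 1) {v : V} (hv : A v = v) : v = 0 := by
  let o : Orientation ℝ V (Fin 2) := (finBasisOfFinrankEq ℝ V Fact.out).orientation
  obtain ⟨θ, rfl⟩ := o.exists_eq_rotation_of_det_eq_one hA
  refine ((o.rotation_eq_self_iff v θ).mp hv).resolve_right fun hθ => hA1 ?_
  rw [hθ, o.rotation_eq_one_iff]

theorem orderOf_mem_of_trace_eq_intCast (hA : LinearEquiv.det A.toLinearEquiv = 1)
    (hA1 : A ≠ 1) {m : ℤ} (hm : LinearMap.trace ℝ V A.toLinearMap = m) :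
    orderOf A ∈ ({2, 3, 4, 6} : Set ℕ) := by
  let o : Orientation ℝ V (Fin 2) := (finBasisOfFinrankEq ℝ V Fact.out).orientation
  obtain ⟨θ, rfl⟩ := o.exists_eq_rotation_of_det_eq_one hA
  set z : ℂ := (θ.toCircle : ℂ)
  have hz : ‖z‖ = 1 := Circle.norm_coe θ.toCircle
  have hre : 2 * z.re = m := by
    rw [← hm, o.trace_rotation]
    simp [z, Real.Angle.coe_toCircle]
  have hm2 : |m| ≤ 2 := by
    have : |2 * z.re| ≤ 2 := by
      rw [abs_mul, abs_two]
      linarith [Complex.abs_re_le_norm z]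
    rw [hre] at this
    exact_mod_cast this
  have hz1 : z ≠ 1 := by
    rwa [Ne, Circle.coe_eq_one, Real.Angle.toCircle_eq_one_iff, ← o.rotation_eq_one_iff]
  rw [o.orderOf_rotation]
  refine orderOf_mem_of_sq_sub_mul_add_one_eq_zero hm2 hz1 ?_
  have := Complex.sq_sub_two_mul_re_mul_add_one_eq_zero hz
  rwa [hre] at this

end LinearIsometryEquiv

namespace IsometryEquiv

variable {V : Type*} [NormedAddCommGroup V] [NormedSpace ℝ V]

theorem apply_eq_toRealLinearIsometryEquiv_add (g : V ≃ᵢ V) (x : V) :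
    g x = g.toRealLinearIsometryEquiv x + g 0 := by
  rw [toRealLinearIsometryEquiv_apply, sub_add_cancel]

def linearPartHom : (V ≃ᵢ V) →* (V ≃ₗᵢ[ℝ] V) where
  toFun := toRealLinearIsometryEquiv
  map_one' := LinearIsometryEquiv.ext fun x => by simp [toRealLinearIsometryEquiv_apply]
  map_mul' g h := LinearIsometryEquiv.ext fun x => by
    change (g * h).toRealLinearIsometryEquiv x =
      g.toRealLinearIsometryEquiv (h.toRealLinearIsometryEquiv x)
    simp only [toRealLinearIsometryEquiv_apply h, map_sub, toRealLinearIsometryEquiv_apply,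
      mul_apply]
    abel

theorem linearPartHom_apply (g : V ≃ᵢ V) : linearPartHom g = g.toRealLinearIsometryEquiv := rfl

def detLinearPartHom : (V ≃ᵢ V) →* ℝˣ :=
  LinearEquiv.det.comp <|
    (MonoidHom.mk' LinearIsometryEquiv.toLinearEquiv fun _ _ => rfl).comp linearPartHom

theorem eq_addRight_of_toRealLinearIsometryEquiv_eq_one {g : V ≃ᵢ V}
    (hg : g.toRealLinearIsometryEquiv = 1) : g = addRight (g 0) :=
  ext fun x => by rw [apply_eq_toRealLinearIsometryEquiv_add, hg]; rfl

theorem conj_addRight (g : V ≃ᵢ V) (v : V) :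
    g * addRight v * g⁻¹ = addRight (g.toRealLinearIsometryEquiv v) := ext fun x => by
  simp only [mul_apply, addRight_apply]
  rw [apply_eq_toRealLinearIsometryEquiv_add, map_add, ← add_right_comm,
    ← apply_eq_toRealLinearIsometryEquiv_add, apply_inv_self]

theorem existsUnique_apply_eq_self [FiniteDimensional ℝ V] (g : V ≃ᵢ V)
    (hg : ∀ v, g.toRealLinearIsometryEquiv v = v → v = 0) : ∃! p, g p = p := by
  set f : V →ₗ[ℝ] V := LinearMap.id - g.toRealLinearIsometryEquiv.toLinearMap
  have hf_apply : ∀ q, f q = q - g.toRealLinearIsometryEquiv q := fun _ => rfl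
  have hf : Function.Injective f := by
    rw [← LinearMap.ker_eq_bot, LinearMap.ker_eq_bot']
    exact fun v hv => hg v (sub_eq_zero.mp hv).symm
  obtain ⟨p, hp⟩ := LinearMap.injective_iff_surjective.mp hf (g 0)
  refine ⟨p, ?_, fun q hq => hf ?_⟩
  · change g p = p
    rw [apply_eq_toRealLinearIsometryEquiv_add, ← hp, hf_apply, add_sub_cancel]
  · rw [hp, hf_apply, toRealLinearIsometryEquiv_apply, hq, sub_sub_cancel]

end IsometryEquiv

section Discreteness

variable {X : Type*} [PseudoEMetricSpace X] (G : Subgroup (X ≃ᵢ X))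

def IsProperlyDiscontinuous : Prop :=
  ∀ K : Set X, IsCompact K → {g : X ≃ᵢ X | g ∈ G ∧ ((⇑g) '' K ∩ K).Nonempty}.Finite

variable {G}

theorem IsProperlyDiscontinuous.finite_setOf_apply_eq_self (hG : IsProperlyDiscontinuous G)
    (p : X) : {g | g ∈ G ∧ g p = p}.Finite :=
  (hG {p} isCompact_singleton).subset fun _ ⟨hg, hgp⟩ => ⟨hg, p, ⟨p, rfl, hgp⟩, rfl⟩

end Discreteness

section Translations

open IsometryEquiv

variable {V : Type*} [NormedAddCommGroup V] (G : Subgroup (V ≃ᵢ V))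

def translations : AddSubgroup V where
  carrier := {v | addRight v ∈ G}
  zero_mem' := by
    change addRight 0 ∈ G
    convert G.one_mem using 1
    ext x
    exact add_zero x
  add_mem' {v w} hv hw := by
    change addRight (v + w) ∈ G
    convert G.mul_mem hv hw using 1
    ext x
    simp only [addRight_apply, mul_apply]
    abel
  neg_mem' {v} hv := by
    change addRight (-v) ∈ G
    convert G.inv_mem hv using 1
    exact (addRight_symm v).symm

theorem mem_translations {v : V} : v ∈ translations G ↔ addRight v ∈ G := Iff.rfl

variable {G}

theorem IsProperlyDiscontinuous.finite_translations_inter_closedBall [ProperSpace V]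
    (hG : IsProperlyDiscontinuous G) (r : ℝ) :
    ((translations G : Set V) ∩ Metric.closedBall 0 r).Finite := by
  have hinj : Function.Injective (addRight : V → V ≃ᵢ V) := fun v w h => by
    simpa using congr($h 0)
  refine ((hG _ (isCompact_closedBall 0 r)).preimage hinj.injOn).subset ?_
  rintro v ⟨hv, hvr⟩
  have h0 : (0 : V) ∈ Metric.closedBall 0 r :=
    Metric.mem_closedBall_self (Metric.nonempty_closedBall.mp ⟨v, hvr⟩)
  exact ⟨hv, v, ⟨0, h0, zero_add v⟩, hvr⟩

theorem IsProperlyDiscontinuous.discreteTopology_translations [ProperSpace V]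
    (hG : IsProperlyDiscontinuous G) : DiscreteTopology (translations G) := by
  refine discreteTopology_of_isOpen_singleton_zero ?_
  refine isOpen_singleton_of_finite_mem_nhds 0 (s := Metric.closedBall 0 1)
    (Metric.closedBall_mem_nhds _ one_pos) ?_
  refine Set.Finite.of_finite_image ?_ Subtype.val_injective.injOn
  refine (hG.finite_translations_inter_closedBall 1).subset ?_
  rintro _ ⟨v, hv, rfl⟩
  exact ⟨v.2, by simpa using hv⟩

variable [NormedSpace ℝ V]

theorem toRealLinearIsometryEquiv_mem_translations {g : V ≃ᵢ V} (hg : g ∈ G) {v : V}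
    (hv : v ∈ translations G) : g.toRealLinearIsometryEquiv v ∈ translations G := by
  rw [mem_translations, ← conj_addRight]
  exact G.mul_mem (G.mul_mem hg hv) (G.inv_mem hg)

theorem eq_one_of_toRealLinearIsometryEquiv_eq_one (hT : translations G = ⊥) {g : V ≃ᵢ V}
    (hg : g ∈ G) (hg1 : g.toRealLinearIsometryEquiv = 1) : g = 1 := by
  have hg0 : g 0 ∈ translations G := by
    rwa [mem_translations, ← eq_addRight_of_toRealLinearIsometryEquiv_eq_one hg1]
  rw [hT, AddSubgroup.mem_bot] at hg0
  rw [eq_addRight_of_toRealLinearIsometryEquiv_eq_one hg1, hg0]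
  ext x
  exact add_zero x

theorem commute_of_commute_toRealLinearIsometryEquiv (hT : translations G = ⊥) {g h : V ≃ᵢ V}
    (hg : g ∈ G) (hh : h ∈ G)
    (hgh : Commute g.toRealLinearIsometryEquiv h.toRealLinearIsometryEquiv) : Commute g h := by
  rw [← commutatorElement_eq_one_iff_commute] at hgh ⊢
  refine eq_one_of_toRealLinearIsometryEquiv_eq_one hT ?_ ?_
  · exact G.mul_mem (G.mul_mem (G.mul_mem hg hh) (G.inv_mem hg)) (G.inv_mem hh)
  · rwa [← linearPartHom_apply, map_commutatorElement]

variable (G) in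
def IsAffinelyIrreducible : Prop :=
  ¬ ∃ L : Submodule ℝ V, L ≠ ⊥ ∧ L ≠ ⊤ ∧ ∀ g ∈ G, ∀ x ∈ L, g.toRealLinearIsometryEquiv x ∈ L

theorem IsAffinelyIrreducible.span_translations_eq_top (hG : IsAffinelyIrreducible G)
    (hT : translations G ≠ ⊥) : Submodule.span ℝ (translations G : Set V) = ⊤ := by
  by_contra htop
  refine hG ⟨_, ?_, htop, fun g hg x hx => ?_⟩
  · rw [Ne, Submodule.span_eq_bot]
    exact fun h => hT ((AddSubgroup.eq_bot_iff_forall _).mpr h)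
  · have hle : Submodule.span ℝ (translations G : Set V) ≤
        (Submodule.span ℝ (translations G : Set V)).comap g.toRealLinearIsometryEquiv.toLinearMap :=
      Submodule.span_le.mpr fun v hv =>
        Submodule.subset_span (toRealLinearIsometryEquiv_mem_translations hg hv)
    exact hle hx

end Translations

theorem LinearMap.exists_trace_eq_intCast_of_mapsTo {V : Type*} [NormedAddCommGroup V]
    [NormedSpace ℝ V] [FiniteDimensional ℝ V] (L : Submodule ℤ V) [DiscreteTopology L]
    [IsZLattice ℝ L] (f : V →ₗ[ℝ] V) (hf : ∀ v ∈ L, f v ∈ L) :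
    ∃ m : ℤ, LinearMap.trace ℝ V f = m := by
  let b := Module.Free.chooseBasis ℤ L
  let bR := b.ofZLatticeBasis ℝ L
  have hdiag : ∀ i, ∃ m : ℤ, LinearMap.toMatrix bR bR f i i = m := by
    intro i
    have hfb : f (bR i) ∈ L := hf _ (by simp [bR])
    refine ⟨b.repr ⟨_, hfb⟩ i, ?_⟩
    rw [LinearMap.toMatrix_apply]
    exact b.ofZLatticeBasis_repr_apply ℝ L ⟨_, hfb⟩ i
  choose m hm using hdiag
  refine ⟨∑ i, m i, ?_⟩
  rw [LinearMap.trace_eq_matrix_trace ℝ bR, Matrix.trace, Int.cast_sum]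
  exact Finset.sum_congr rfl fun i _ => hm i

section OrientationPreserving

open IsometryEquiv

variable {V : Type*} [NormedAddCommGroup V] [InnerProductSpace ℝ V]

theorem infinite_setOf_det_eq_one [FiniteDimensional ℝ V] {G : Subgroup (V ≃ᵢ V)}
    (hG : Infinite G) :
    {g | g ∈ G ∧ LinearEquiv.det g.toRealLinearIsometryEquiv.toLinearEquiv = 1}.Infinite := by
  let f := detLinearPartHom.comp G.subtype
  have hrange : Finite f.range := by
    refine Set.Finite.subset (s := {1, -1}) (Set.toFinite _) ?_
    rintro _ ⟨g, rfl⟩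
    exact g.1.toRealLinearIsometryEquiv.det_eq_one_or_eq_neg_one
  have hker : Infinite f.ker := not_finite_iff_infinite.mp fun hker =>
    not_finite_iff_infinite.mpr hG (f.finite_iff_finite_ker_range.mpr ⟨hker, hrange⟩)
  exact Set.infinite_of_injective_forall_mem (f := fun g : f.ker => (g : G).1)
    (fun g h hgh => Subtype.ext (Subtype.ext hgh)) fun g => ⟨g.1.2, g.2⟩

theorem translations_ne_bot [Fact (finrank ℝ V = 2)] {G : Subgroup (V ≃ᵢ V)} (hinf : Infinite G)
    (hG : IsProperlyDiscontinuous G) : translations G ≠ ⊥ := by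
  have : FiniteDimensional ℝ V := .of_fact_finrank_eq_two
  intro hT
  have hS := infinite_setOf_det_eq_one hinf
  obtain ⟨g₀, ⟨hg₀, hg₀det⟩, hg₀1⟩ := (hS.sdiff (Set.finite_singleton 1)).nonempty
  have hlin : g₀.toRealLinearIsometryEquiv ≠ 1 := fun h =>
    hg₀1 (eq_one_of_toRealLinearIsometryEquiv_eq_one hT hg₀ h)
  obtain ⟨p, hp, hp_unique⟩ := g₀.existsUnique_apply_eq_self fun _ =>
    LinearIsometryEquiv.eq_zero_of_apply_eq_self_of_det_eq_one hg₀det hlin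
  refine hS ((hG.finite_setOf_apply_eq_self p).subset fun h ⟨hh, hhdet⟩ => ⟨hh, ?_⟩)
  have hcomm : Commute g₀ h := commute_of_commute_toRealLinearIsometryEquiv hT hg₀ hh
    (LinearIsometryEquiv.commute_of_det_eq_one hg₀det hhdet)
  refine hp_unique _ ?_
  change g₀ (h p) = h p
  rw [← mul_apply, hcomm.eq, mul_apply, hp]

end OrientationPreserving

instance : Fact (finrank ℝ E2 = 2) := ⟨finrank_euclideanSpace_fin⟩

theorem special_group_rotation_periods_2d
    (G : Subgroup (E2 ≃ᵢ E2))
    (hinf : Infinite G)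
    (hdisc : ∀ K : Set E2, IsCompact K →
      {g : E2 ≃ᵢ E2 | g ∈ G ∧ ((⇑g) '' K ∩ K).Nonempty}.Finite)
    (hirr : ¬ ∃ L : Submodule ℝ E2, L ≠ ⊥ ∧ L ≠ ⊤ ∧
      ∀ g ∈ G, ∀ x ∈ L, g.toRealLinearIsometryEquiv x ∈ L)
    (A : E2 ≃ₗᵢ[ℝ] E2)
    (hA : ∃ g ∈ G, g.toRealLinearIsometryEquiv = A)
    (hAdet : LinearEquiv.det A.toLinearEquiv = 1)
    (hA1 : A ≠ 1) :
    IsOfFinOrder A ∧ (orderOf A = 2 ∨ orderOf A = 3 ∨ orderOf A = 4 ∨ orderOf A = 6) := by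
  obtain ⟨g, hg, rfl⟩ := hA
  let L := (translations G).toIntSubmodule
  have : DiscreteTopology L := IsProperlyDiscontinuous.discreteTopology_translations hdisc
  have : IsZLattice ℝ L :=
    ⟨IsAffinelyIrreducible.span_translations_eq_top hirr (translations_ne_bot hinf hdisc)⟩
  obtain ⟨m, hm⟩ := LinearMap.exists_trace_eq_intCast_of_mapsTo L _
    fun _ hv => toRealLinearIsometryEquiv_mem_translations hg hv
  have horder := LinearIsometryEquiv.orderOf_mem_of_trace_eq_intCast hAdet hA1 hm
  refine ⟨orderOf_pos_iff.mp (Nat.pos_of_ne_zero fun h0 => ?_), horder⟩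
  simp [h0] at horder
end
end

section
/- Let Λ be a full-rank lattice in ℝ³ and let A ∈ O(3) satisfy A(Λ) = Λ. Then A has finite order, and its order belongs to {1, 2, 3, 4, 6}. -/
/- STATEMENT 2: Let Λ be a full-rank lattice in ℝ³ and let A ∈ O(3) satisfy A(Λ) = Λ.
Then A has finite order, and its order belongs to {1, 2, 3, 4, 6}. -/

noncomputable section

abbrev E3 : Type := EuclideanSpace ℝ (Fin 3)

/-! Since `A` permutes the lattice and preserves norms, its powers send each basis vector into
the finite set of lattice points of the same norm, so `A` has finite order `n`. In the basis `b`
the matrix of `A` has integer entries. Its minimal polynomial over `ℚ` divides `X ^ n - 1`, hence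
is the product of the distinct cyclotomic polynomials `Φ_d` dividing it; so `n` is the lcm of
these `d`, and `∑ φ d ≤ 3`. Now `φ d ≤ 3` forces `d ∣ 12`, and a finite check leaves
`n ∈ {1, 2, 3, 4, 6}`. -/

open Nat in
theorem Nat.dvd_twelve_of_totient_le_three {d : ℕ} (hd : d ≠ 0) (h : φ d ≤ 3) :
    d ∣ 12 := by
  refine (Nat.dvd_iff_prime_pow_dvd_dvd 12 d).2 fun p k hp hpk => ?_
  rcases k.eq_zero_or_pos with rfl | hk
  · simp
  have hφ : p ^ (k - 1) * (p - 1) ≤ 3 := by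
    rw [← Nat.totient_prime_pow hp hk]
    exact (Nat.le_of_dvd (Nat.totient_pos.2 (Nat.pos_of_ne_zero hd))
      (Nat.totient_dvd_of_dvd hpk)).trans h
  have hp4 : p ≤ 4 := by
    have := Nat.le_mul_of_pos_left (p - 1) (pow_pos hp.pos (k - 1))
    omega
  have hk3 : k ≤ 3 := by
    have h1 : k - 1 < 2 ^ (k - 1) := Nat.lt_two_pow_self
    have h2 : 2 ^ (k - 1) ≤ p ^ (k - 1) := Nat.pow_le_pow_left hp.two_le _
    have h3 : p ^ (k - 1) ≤ p ^ (k - 1) * (p - 1) :=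
      Nat.le_mul_of_pos_right _ (Nat.sub_pos_of_lt hp.one_lt)
    omega
  interval_cases p <;> interval_cases k <;> revert hp hφ <;> decide

open Nat in
theorem lcm_mem_of_sum_totient_le_three :
    ∀ S ∈ (Nat.divisors 12).powerset, ∑ d ∈ S, φ d ≤ 3 →
      S.lcm id ∈ ({1, 2, 3, 4, 6} : Finset ℕ) := by
  decide

open Polynomial

section CyclotomicFactors

variable {R : Type*} [Ring R] [Algebra ℚ R] {x : R}

open scoped Classical in
/-- For a matrix of finite order these are the orders of its complex eigenvalues. -/
def cyclotomicFactorIndices (x : R) : Finset ℕ :=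
  (orderOf x).divisors.filter fun d => cyclotomic d ℚ ∣ minpoly ℚ x

lemma mem_cyclotomicFactorIndices {d : ℕ} :
    d ∈ cyclotomicFactorIndices x ↔
      d ∈ (orderOf x).divisors ∧ cyclotomic d ℚ ∣ minpoly ℚ x := by
  classical
  exact Finset.mem_filter

lemma prod_cyclotomic_dvd_minpoly (x : R) :
    ∏ d ∈ cyclotomicFactorIndices x, cyclotomic d ℚ ∣ minpoly ℚ x :=
  Finset.prod_dvd_of_coprime (fun _ _ _ _ hde => cyclotomic.isCoprime_rat hde)
    fun _ hd => (mem_cyclotomicFactorIndices.1 hd).2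

lemma minpoly_dvd_prod_cyclotomic (hx : IsOfFinOrder x) :
    minpoly ℚ x ∣ ∏ d ∈ cyclotomicFactorIndices x, cyclotomic d ℚ := by
  classical
  have hdvd : minpoly ℚ x ∣ X ^ orderOf x - 1 :=
    minpoly.dvd ℚ x (by simp [pow_orderOf_eq_one])
  rw [← prod_cyclotomic_eq_X_pow_sub_one hx.orderOf_pos,
    ← Finset.prod_filter_mul_prod_filter_not (orderOf x).divisors
      fun d => cyclotomic d ℚ ∣ minpoly ℚ x] at hdvd
  refine (IsCoprime.prod_left fun d hd => ?_).symm.dvd_of_dvd_mul_right hdvd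
  obtain ⟨hd, hndvd⟩ := Finset.mem_filter.1 hd
  exact (cyclotomic.irreducible_rat (Nat.pos_of_mem_divisors hd)).coprime_iff_not_dvd.2 hndvd

lemma orderOf_eq_lcm_cyclotomicFactorIndices (hx : IsOfFinOrder x) :
    orderOf x = (cyclotomicFactorIndices x).lcm id := by
  set L := (cyclotomicFactorIndices x).lcm id
  have hL_dvd : L ∣ orderOf x :=
    Finset.lcm_dvd fun d hd => Nat.dvd_of_mem_divisors (mem_cyclotomicFactorIndices.1 hd).1
  have hL : 0 < L := Nat.pos_of_dvd_of_pos hL_dvd hx.orderOf_pos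
  have hmin : minpoly ℚ x ∣ X ^ L - 1 := by
    refine (minpoly_dvd_prod_cyclotomic hx).trans ?_
    rw [← prod_cyclotomic_eq_X_pow_sub_one hL]
    exact Finset.prod_dvd_prod_of_subset _ _ _
      fun d hd => Nat.mem_divisors.2 ⟨Finset.dvd_lcm hd, hL.ne'⟩
  have hpow : x ^ L = 1 := by simpa [sub_eq_zero] using minpoly.dvd_iff.1 hmin
  exact Nat.dvd_antisymm (orderOf_dvd_of_pow_eq_one hpow) hL_dvd

lemma sum_totient_le_natDegree_minpoly (hx : IsOfFinOrder x) :
    ∑ d ∈ cyclotomicFactorIndices x, d.totient ≤ (minpoly ℚ x).natDegree := by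
  have hint : IsIntegral ℚ x :=
    ⟨X ^ orderOf x - C 1, monic_X_pow_sub_C 1 hx.orderOf_pos.ne', by simp [pow_orderOf_eq_one]⟩
  calc ∑ d ∈ cyclotomicFactorIndices x, d.totient
      = (∏ d ∈ cyclotomicFactorIndices x, cyclotomic d ℚ).natDegree := by
        rw [natDegree_prod _ _ fun d _ => cyclotomic_ne_zero d ℚ]
        simp only [natDegree_cyclotomic]
    _ ≤ (minpoly ℚ x).natDegree :=
        natDegree_le_of_dvd (prod_cyclotomic_dvd_minpoly x) (minpoly.ne_zero hint)

end CyclotomicFactors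

theorem orderOf_mem_of_natDegree_minpoly_le_three {R : Type*} [Ring R] [Algebra ℚ R] {x : R}
    (hx : IsOfFinOrder x) (hdeg : (minpoly ℚ x).natDegree ≤ 3) :
    orderOf x ∈ ({1, 2, 3, 4, 6} : Set ℕ) := by
  have hsum := (sum_totient_le_natDegree_minpoly hx).trans hdeg
  have hsub : cyclotomicFactorIndices x ⊆ Nat.divisors 12 := fun d hd =>
    Nat.mem_divisors.2 ⟨Nat.dvd_twelve_of_totient_le_three
      (Nat.pos_of_mem_divisors (mem_cyclotomicFactorIndices.1 hd).1).ne'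
      ((Finset.single_le_sum (fun _ _ => Nat.zero_le _) hd).trans hsum), by norm_num⟩
  rw [orderOf_eq_lcm_cyclotomicFactorIndices hx]
  simpa using lcm_mem_of_sum_totient_le_three _ (Finset.mem_powerset.2 hsub) hsum

theorem Matrix.orderOf_mem_of_card_le_three {ι : Type*} [Fintype ι] [DecidableEq ι]
    (hι : Fintype.card ι ≤ 3) {M : Matrix ι ι ℚ} (hM : IsOfFinOrder M) :
    orderOf M ∈ ({1, 2, 3, 4, 6} : Set ℕ) :=
  orderOf_mem_of_natDegree_minpoly_le_three hM <|
    (natDegree_le_of_dvd M.minpoly_dvd_charpoly M.charpoly_monic.ne_zero).trans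
      (M.charpoly_natDegree_eq_dim.trans_le hι)

open Set Submodule

theorem Module.Basis.setOf_intCombination_eq_span {ι E : Type*} [Fintype ι] [AddCommGroup E]
    [Module ℝ E] (b : Module.Basis ι ℝ E) :
    {x : E | ∃ c : ι → ℤ, x = ∑ i, (c i : ℝ) • b i} = span ℤ (range b) := by
  ext x
  simp [mem_span_range_iff_exists_fun, Int.cast_smul_eq_zsmul, eq_comm]

section LinearIsometryEquiv

variable {E ι : Type*} [NormedAddCommGroup E] [NormedSpace ℝ E] [FiniteDimensional ℝ E]
  [Finite ι] (b : Module.Basis ι ℝ E)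

theorem LinearIsometryEquiv.isOfFinOrder_of_mapsTo_span {A : E ≃ₗᵢ[ℝ] E}
    (hA : MapsTo A (span ℤ (range b)) (span ℤ (range b))) : IsOfFinOrder A := by
  set L : Set E := ↑(span ℤ (range b))
  have hpow : ∀ k : ℕ, MapsTo ⇑(A ^ k) L L := by
    intro k
    induction k with
    | zero => exact mapsTo_id L
    | succ k ih => rw [pow_succ, coe_mul]; exact ih.comp hA
  have heval : Function.Injective fun (g : E ≃ₗᵢ[ℝ] E) (i : ι) => g (b i) := fun g h hgh =>
    LinearIsometryEquiv.toLinearEquiv_injective (b.ext' fun i => congrFun hgh i)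
  have hfin : (pi univ fun i => Metric.closedBall (0 : E) ‖b i‖ ∩ L).Finite :=
    Finite.pi fun i => ZSpan.setFinite_inter b Metric.isBounded_closedBall
  refine finite_powers.1 ((hfin.preimage heval.injOn).subset ?_)
  rintro _ ⟨k, rfl⟩ i -
  exact ⟨by simp, hpow k (subset_span ⟨i, rfl⟩)⟩

end LinearIsometryEquiv

theorem LinearMap.exists_toMatrix_eq_map_ratCast {ι E : Type*} [Fintype ι] [DecidableEq ι]
    [AddCommGroup E] [Module ℝ E] (b : Module.Basis ι ℝ E) {f : E →ₗ[ℝ] E}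
    (hf : MapsTo f (span ℤ (Set.range b)) (span ℤ (Set.range b))) :
    ∃ M : Matrix ι ι ℚ, toMatrix b b f = M.map (↑) := by
  have hfb (j : ι) : f (b j) ∈ span ℤ (Set.range b) := hf (subset_span ⟨j, rfl⟩)
  refine ⟨.of fun i j => ((b.restrictScalars ℤ).repr ⟨f (b j), hfb j⟩ i : ℚ), ?_⟩
  ext i j
  simpa [LinearMap.toMatrix_apply] using (b.restrictScalars_repr_apply ℤ ⟨f (b j), hfb j⟩ i).symm

section ToMatrix

variable {E ι : Type*} [NormedAddCommGroup E] [NormedSpace ℝ E] [Fintype ι] [DecidableEq ι]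
  (b : Module.Basis ι ℝ E)

def LinearIsometryEquiv.toMatrixHom : (E ≃ₗᵢ[ℝ] E) →* Matrix ι ι ℝ where
  toFun A := LinearMap.toMatrix b b A.toLinearEquiv
  map_one' := LinearMap.toMatrix_id b
  map_mul' _ _ := LinearMap.toMatrix_comp b b b _ _

theorem LinearIsometryEquiv.toMatrixHom_injective :
    Function.Injective (LinearIsometryEquiv.toMatrixHom b) := fun _ _ h =>
  LinearIsometryEquiv.toLinearEquiv_injective <| LinearEquiv.toLinearMap_injective <|
    (LinearMap.toMatrix b b).injective h

theorem LinearIsometryEquiv.orderOf_eq_of_toMatrix_eq_map_ratCast {A : E ≃ₗᵢ[ℝ] E}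
    {M : Matrix ι ι ℚ} (hM : LinearMap.toMatrix b b A.toLinearEquiv = M.map (↑)) :
    orderOf A = orderOf M :=
  calc orderOf A = orderOf (toMatrixHom b A) :=
        (orderOf_injective _ (toMatrixHom_injective b) A).symm
    _ = orderOf ((Rat.castHom ℝ).mapMatrix M) := congrArg orderOf hM
    _ = orderOf M := orderOf_injective _ (Matrix.map_injective Rat.cast_injective) M

end ToMatrix

theorem crystallographic_restriction_3d
    (b : Module.Basis (Fin 3) ℝ E3)
    (Λ : Set E3)
    (hΛ : Λ = {x : E3 | ∃ c : Fin 3 → ℤ, x = ∑ i, (c i : ℝ) • b i})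
    (A : E3 ≃ₗᵢ[ℝ] E3)
    (hA : (⇑A) '' Λ = Λ) :
    IsOfFinOrder A ∧ orderOf A ∈ ({1, 2, 3, 4, 6} : Set ℕ) := by
  rw [b.setOf_intCombination_eq_span] at hΛ
  subst hΛ
  have hmaps : MapsTo A (span ℤ (range b)) (span ℤ (range b)) :=
    mapsTo_iff_image_subset.2 hA.subset
  have hfin : IsOfFinOrder A := A.isOfFinOrder_of_mapsTo_span b hmaps
  obtain ⟨M, hM⟩ := LinearMap.exists_toMatrix_eq_map_ratCast b hmaps
  have hord : orderOf A = orderOf M := A.orderOf_eq_of_toMatrix_eq_map_ratCast b hM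
  refine ⟨hfin, hord ▸ ?_⟩
  exact M.orderOf_mem_of_card_le_three (by simp)
    (orderOf_pos_iff.1 (hord ▸ hfin.orderOf_pos))
end
end

section
/- Let C be the cube with vertex set V = {±1}³ ⊂ ℝ³ and let G(C) = {A ∈ O(3) : A(V) = V}. Let T = {(1,1,1), (1,−1,−1), (−1,1,−1), (−1,−1,1)} be a regular tetrahedron inscribed at alternating vertices of C. Let R ∈ G(C) be a plane reflection whose mirror contains a vertex of C (equivalently, R is the reflection in a plane spanned by a pair of opposite face diagonals of C). If S ∈ G(C) is a rotation of order 3 whose rotation axis is not contained in the mirror of R, then the subgroup of O(3) generated by R and S equals the full tetrahedral group {A ∈ O(3) : A(T) = T}, of order 24. -/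
/- STATEMENT 5: If R is a plane reflection in the symmetry group G(C) of the cube C with
vertex set V = {±1}³ whose mirror contains a vertex of C, and S ∈ G(C) is a rotation of
order 3 whose rotation axis is not contained in the mirror of R, then R and S generate the
full tetrahedral group {A ∈ O(3) : A(T) = T}, of order 24, where
T = {(1,1,1), (1,−1,−1), (−1,1,−1), (−1,−1,1)}. -/

noncomputable section

def pt (x y z : ℝ) : E3 := WithLp.toLp 2 ![x, y, z]

/-- The vertex set {±1}³ of the cube. -/
def cubeV : Set E3 := {v | ∀ i, v i = 1 ∨ v i = -1}

/-- The regular tetrahedron inscribed at alternating vertices of the cube. -/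
def tetT : Set E3 := {pt 1 1 1, pt 1 (-1) (-1), pt (-1) 1 (-1), pt (-1) (-1) 1}

/-!
A symmetry of the cube either preserves `T` or exchanges it with `-T`: the vertices of `T` are
the cube vertices with coordinate product `1`, and two cube vertices with inner product `-1`
(as any two vertices of `T` have) share their coordinate product. Since `R` fixes a vertex and
`S³ = 1`, both preserve `T`. Because the vertices of `T` span `ℝ³`, the action on them
embeds the stabiliser of `T` into `Perm (Fin 4)`. There `R` becomes a transposition (an
involution with a fixed point) and `S` a 3-cycle; the axis of `S` is the line through the
vertex `tᵢ` it fixes, so the hypothesis on the axis says that the transposition moves `tᵢ`.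
Then `R * S` is a 4-cycle and, together with the adjacent transposition `R`, generates all of
`Perm (Fin 4)`; hence `R, S` generate the whole stabiliser, which has order `4! = 24`.
-/

open scoped RealInnerProductSpace Pointwise
open Set Equiv

namespace Tetrahedral

@[simp] lemma pt_apply_zero (x y z : ℝ) : pt x y z 0 = x := rfl
@[simp] lemma pt_apply_one (x y z : ℝ) : pt x y z 1 = y := rfl
@[simp] lemma pt_apply_two (x y z : ℝ) : pt x y z 2 = z := rfl

lemma pt_eta (v : E3) : pt (v 0) (v 1) (v 2) = v := by
  ext i; fin_cases i <;> rfl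

def tetVertex : Fin 4 → E3 := ![pt 1 1 1, pt 1 (-1) (-1), pt (-1) 1 (-1), pt (-1) (-1) 1]

lemma range_tetVertex : range tetVertex = tetT := by
  simp only [tetVertex, tetT, Matrix.range_cons, Matrix.range_empty, union_empty, singleton_union]

lemma tetVertex_injective : Function.Injective tetVertex := by
  intro i j h
  fin_cases i <;> fin_cases j <;> first
    | rfl
    | (have := congrArg (fun v : E3 => (v 0, v 1, v 2)) h; norm_num [tetVertex] at this)

lemma sum_tetVertex : ∑ i, tetVertex i = 0 := by
  ext k
  fin_cases k <;> simp [Fin.sum_univ_four, tetVertex]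

lemma span_range_tetVertex : Submodule.span ℝ (range tetVertex) = ⊤ := by
  refine Submodule.eq_top_iff'.mpr fun v => ?_
  have hv : v = (v 0 / 2) • (tetVertex 0 + tetVertex 1) + (v 1 / 2) • (tetVertex 0 + tetVertex 2)
      + (v 2 / 2) • (tetVertex 0 + tetVertex 3) := by
    ext k; fin_cases k <;> simp [tetVertex]
  have hmem : ∀ i, tetVertex i ∈ Submodule.span ℝ (range tetVertex) :=
    fun i => Submodule.subset_span (mem_range_self i)
  rw [hv]
  apply_rules [Submodule.add_mem, Submodule.smul_mem]

lemma mem_tetT_iff {v : E3} : v ∈ tetT ↔ v ∈ cubeV ∧ v 0 * v 1 * v 2 = 1 := by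
  constructor
  · rintro (rfl | rfl | rfl | rfl) <;> refine ⟨fun k => ?_, by norm_num⟩ <;> fin_cases k <;>
      norm_num [pt]
  · rintro ⟨hv, hp⟩
    rw [← pt_eta v]
    rcases hv 0 with h0 | h0 <;> rcases hv 1 with h1 | h1 <;> rcases hv 2 with h2 | h2 <;>
      rw [h0, h1, h2] at hp ⊢ <;> first | (norm_num at hp; done) | simp [tetT]

lemma neg_mem_tetT_iff {v : E3} : -v ∈ tetT ↔ v ∈ cubeV ∧ v 0 * v 1 * v 2 = -1 := by
  have hV : -v ∈ cubeV ↔ v ∈ cubeV := by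
    refine forall_congr' fun k => ?_
    rw [PiLp.neg_apply, neg_eq_iff_eq_neg, neg_inj, or_comm]
  rw [mem_tetT_iff, hV]
  simp only [PiLp.neg_apply]
  constructor <;> rintro ⟨hv, hp⟩ <;> exact ⟨hv, by linarith⟩

lemma coord_prod_eq_one_or_neg_one {v : E3} (hv : v ∈ cubeV) :
    v 0 * v 1 * v 2 = 1 ∨ v 0 * v 1 * v 2 = -1 := by
  rcases hv 0 with h0 | h0 <;> rcases hv 1 with h1 | h1 <;> rcases hv 2 with h2 | h2 <;>
    simp [h0, h1, h2]

lemma mem_tetT_or_neg_mem_tetT {v : E3} (hv : v ∈ cubeV) : v ∈ tetT ∨ -v ∈ tetT := by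
  rw [mem_tetT_iff, neg_mem_tetT_iff]
  exact (coord_prod_eq_one_or_neg_one hv).imp (And.intro hv) (And.intro hv)

lemma neg_notMem_tetT {v : E3} (hv : v ∈ tetT) : -v ∉ tetT := by
  rw [neg_mem_tetT_iff]
  rw [mem_tetT_iff] at hv
  exact fun h => by linarith [hv.2, h.2]

lemma inner_eq_neg_one_of_mem_tetT {v w : E3} (hv : v ∈ tetT) (hw : w ∈ tetT) (hvw : v ≠ w) :
    ⟪v, w⟫ = -1 := by
  rcases hv with rfl | rfl | rfl | rfl <;> rcases hw with rfl | rfl | rfl | rfl <;>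
    first | exact absurd rfl hvw | simp [PiLp.inner_apply, Fin.sum_univ_three]

lemma coord_prod_eq_of_inner_eq_neg_one {v w : E3} (hv : v ∈ cubeV) (hw : w ∈ cubeV)
    (h : ⟪v, w⟫ = -1) : v 0 * v 1 * v 2 = w 0 * w 1 * w 2 := by
  simp only [PiLp.inner_apply, Fin.sum_univ_three, RCLike.inner_apply, conj_trivial] at h
  rcases hv 0 with h0 | h0 <;> rcases hv 1 with h1 | h1 <;> rcases hv 2 with h2 | h2 <;>
  rcases hw 0 with g0 | g0 <;> rcases hw 1 with g1 | g1 <;> rcases hw 2 with g2 | g2 <;>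
    norm_num [h0, h1, h2, g0, g1, g2] at h <;> norm_num [h0, h1, h2, g0, g1, g2]

section CubeSymmetry

variable {A : E3 ≃ₗᵢ[ℝ] E3}

lemma mapsTo_tetT_or_neg (hA : A '' cubeV = cubeV) :
    MapsTo A tetT tetT ∨ MapsTo A tetT (-tetT) := by
  have hV : ∀ v ∈ tetT, A v ∈ cubeV :=
    fun v hv => hA ▸ mem_image_of_mem A (mem_tetT_iff.mp hv).1
  set w := pt 1 1 1
  have hw : w ∈ tetT := mem_insert _ _
  have hprod : ∀ v ∈ tetT, A v 0 * A v 1 * A v 2 = A w 0 * A w 1 * A w 2 := by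
    intro v hv
    rcases eq_or_ne v w with rfl | hvw
    · rfl
    refine coord_prod_eq_of_inner_eq_neg_one (hV v hv) (hV w hw) ?_
    rw [A.inner_map_map]
    exact inner_eq_neg_one_of_mem_tetT hv hw hvw
  rcases coord_prod_eq_one_or_neg_one (hV w hw) with h | h
  · exact .inl fun v hv => mem_tetT_iff.mpr ⟨hV v hv, (hprod v hv).trans h⟩
  · exact .inr fun v hv => neg_mem_tetT_iff.mpr ⟨hV v hv, (hprod v hv).trans h⟩

lemma image_tetT_eq_of_mapsTo (h : MapsTo A tetT tetT) : A '' tetT = tetT :=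
  ((range_tetVertex ▸ finite_range tetVertex).injOn_iff_bijOn_of_mapsTo h |>.mp
    A.injective.injOn).image_eq

lemma exists_mem_tetT_fixed (hv : ∃ v ∈ cubeV, A v = v) : ∃ w ∈ tetT, A w = w := by
  obtain ⟨v, hv, hAv⟩ := hv
  rcases mem_tetT_or_neg_mem_tetT hv with h | h
  · exact ⟨v, h, hAv⟩
  · exact ⟨-v, h, by rw [map_neg, hAv]⟩

lemma image_tetT_of_fixes_vertex (hA : A '' cubeV = cubeV) (hv : ∃ v ∈ cubeV, A v = v) :
    A '' tetT = tetT := by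
  obtain ⟨w, hw, hAw⟩ := exists_mem_tetT_fixed hv
  refine image_tetT_eq_of_mapsTo <| (mapsTo_tetT_or_neg hA).resolve_right fun h => ?_
  exact neg_notMem_tetT hw (hAw ▸ h hw)

lemma image_tetT_of_pow_three_eq_one (hA : A '' cubeV = cubeV) (h3 : A ^ 3 = 1) :
    A '' tetT = tetT := by
  refine image_tetT_eq_of_mapsTo <| (mapsTo_tetT_or_neg hA).resolve_right fun h => ?_
  have hneg : MapsTo A (-tetT) tetT := fun v hv => by
    simpa [map_neg] using h (mem_neg.mp hv)
  have h3' : MapsTo ⇑(A ^ 3) tetT (-tetT) := by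
    rw [pow_succ, pow_two, LinearIsometryEquiv.coe_mul, LinearIsometryEquiv.coe_mul]
    exact h.comp (hneg.comp h)
  rw [h3] at h3'
  have hw : pt 1 1 1 ∈ tetT := mem_insert _ _
  exact neg_notMem_tetT hw (mem_neg.mp (h3' hw))

end CubeSymmetry

section Fin4

variable {s : Perm (Fin 4)} {i : Fin 4}

lemma exists_apply_eq_self_of_pow_three_eq_one (hs3 : s ^ 3 = 1) (hs1 : s ≠ 1) :
    ∃ i, s i = i := by
  revert s; decide

lemma eq_swap_of_mul_self_eq_one {r : Perm (Fin 4)} (hr2 : r * r = 1) (hfix : ∃ k, r k = k)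
    {j : Fin 4} (hj : r j ≠ j) : r = swap j (r j) := by
  revert r j; decide

lemma orbit_eq_univ_of_pow_three_eq_one (hs3 : s ^ 3 = 1) (hs1 : s ≠ 1) (hi : s i = i)
    {m : Fin 4} (hm : m ≠ i) : ({i, m, s m, s (s m)} : Multiset (Fin 4)) = Finset.univ.val := by
  revert s i m; decide

lemma closure_swap_pow_three_eq_top (hs3 : s ^ 3 = 1) (hs1 : s ≠ 1) (hi : s i = i)
    {j : Fin 4} (hij : i ≠ j) : Subgroup.closure {swap i j, s} = ⊤ := by
  have hcycle : (swap i j * s).IsCycle ∧ (swap i j * s).support = Finset.univ := by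
    revert s i j; unfold Perm.IsCycle; decide
  have htop := Perm.closure_cycle_adjacent_swap hcycle.1 hcycle.2 i
  rw [Perm.mul_apply, hi, swap_apply_left] at htop
  rw [eq_top_iff, ← htop, Subgroup.closure_le]
  rintro _ (rfl | rfl)
  · exact Subgroup.mul_mem _ (Subgroup.subset_closure (by simp)) (Subgroup.subset_closure (by simp))
  · exact Subgroup.subset_closure (by simp)

end Fin4

def tetStab : Subgroup (E3 ≃ₗᵢ[ℝ] E3) where
  carrier := {A | A '' tetT = tetT}
  one_mem' := image_id tetT
  mul_mem' {A B} hA hB := by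
    change (A * B : E3 ≃ₗᵢ[ℝ] E3) '' tetT = tetT
    rw [LinearIsometryEquiv.coe_mul, image_comp, hB, hA]
  inv_mem' {A} hA := by
    change ⇑A⁻¹ '' tetT = tetT
    nth_rw 1 [← hA]
    simp [image_image]

lemma exists_tetVertex_eq_apply (A : tetStab) (i : Fin 4) :
    ∃ j, tetVertex j = (A : E3 ≃ₗᵢ[ℝ] E3) (tetVertex i) := by
  rw [← mem_range, range_tetVertex, ← A.2]
  exact mem_image_of_mem _ (range_tetVertex ▸ mem_range_self i)

def tetIndex (A : tetStab) (i : Fin 4) : Fin 4 := (exists_tetVertex_eq_apply A i).choose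

lemma tetVertex_tetIndex (A : tetStab) (i : Fin 4) :
    tetVertex (tetIndex A i) = (A : E3 ≃ₗᵢ[ℝ] E3) (tetVertex i) :=
  (exists_tetVertex_eq_apply A i).choose_spec

def tetPerm : tetStab →* Perm (Fin 4) where
  toFun A := .ofBijective (tetIndex A) <| Finite.injective_iff_bijective.mp fun i j h =>
    tetVertex_injective <| (A : E3 ≃ₗᵢ[ℝ] E3).injective <| by
      rw [← tetVertex_tetIndex, ← tetVertex_tetIndex, h]
  map_one' := Equiv.ext fun i => tetVertex_injective <| tetVertex_tetIndex 1 i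
  map_mul' A B := Equiv.ext fun i => tetVertex_injective <| by
    simp only [Perm.mul_apply, ofBijective_apply, tetVertex_tetIndex]
    rfl

lemma tetVertex_tetPerm (A : tetStab) (i : Fin 4) :
    tetVertex (tetPerm A i) = (A : E3 ≃ₗᵢ[ℝ] E3) (tetVertex i) :=
  tetVertex_tetIndex A i

lemma tetPerm_apply_eq_iff {A : tetStab} {i j : Fin 4} :
    tetPerm A i = j ↔ (A : E3 ≃ₗᵢ[ℝ] E3) (tetVertex i) = tetVertex j := by
  rw [← tetVertex_tetPerm, tetVertex_injective.eq_iff]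

lemma tetPerm_eq_swap {A : tetStab} (h2 : A * A = 1)
    (hv : ∃ v ∈ cubeV, (A : E3 ≃ₗᵢ[ℝ] E3) v = v) {j : Fin 4} (hj : tetPerm A j ≠ j) :
    tetPerm A = swap j (tetPerm A j) := by
  refine eq_swap_of_mul_self_eq_one (by rw [← map_mul, h2, map_one]) ?_ hj
  obtain ⟨w, hw, hAw⟩ := exists_mem_tetT_fixed hv
  obtain ⟨k, rfl⟩ := range_tetVertex ▸ hw
  exact ⟨k, tetPerm_apply_eq_iff.mpr hAw⟩

lemma tetPerm_injective : Function.Injective tetPerm := fun A B h => by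
  have : ((A : E3 ≃ₗᵢ[ℝ] E3) : E3 →ₗ[ℝ] E3) = (B : E3 ≃ₗᵢ[ℝ] E3) :=
    LinearMap.ext_on_range span_range_tetVertex fun i => by
      change (A : E3 ≃ₗᵢ[ℝ] E3) (tetVertex i) = (B : E3 ≃ₗᵢ[ℝ] E3) (tetVertex i)
      rw [← tetVertex_tetPerm, ← tetVertex_tetPerm, h]
  exact Subtype.ext <| LinearIsometryEquiv.ext (LinearMap.congr_fun this)

lemma tetVertex_orbit_sum {s : Perm (Fin 4)} {i m : Fin 4} (hs3 : s ^ 3 = 1) (hs1 : s ≠ 1)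
    (hi : s i = i) (hm : m ≠ i) :
    tetVertex m + tetVertex (s m) + tetVertex (s (s m)) = -tetVertex i := by
  have h := sum_tetVertex
  rw [Finset.sum_eq_multiset_sum, ← orbit_eq_univ_of_pow_three_eq_one hs3 hs1 hi hm] at h
  simp only [Multiset.insert_eq_cons, Multiset.map_cons, Multiset.sum_cons, Multiset.map_singleton,
    Multiset.sum_singleton] at h
  rw [eq_neg_iff_add_eq_zero, ← h]
  abel

/-- `3 • x = x + A x + A (A x)`, while `1 + A + A²` sends every vertex into `ℝ ∙ tᵢ`: the
three vertices other than `tᵢ` form one orbit and sum to `-tᵢ`. -/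
lemma mem_span_tetVertex_of_apply_eq_self (A : tetStab) {i : Fin 4} (h3 : tetPerm A ^ 3 = 1)
    (h1 : tetPerm A ≠ 1) (hi : tetPerm A i = i) {x : E3} (hx : (A : E3 ≃ₗᵢ[ℝ] E3) x = x) :
    x ∈ ℝ ∙ tetVertex i := by
  set f : E3 →ₗ[ℝ] E3 := ((A : E3 ≃ₗᵢ[ℝ] E3) : E3 →ₗ[ℝ] E3)
  set P := LinearMap.id + f + f ∘ₗ f
  have hP : ∀ m, P (tetVertex m) ∈ ℝ ∙ tetVertex i := by
    intro m
    have hf : ∀ k, f (tetVertex k) = tetVertex (tetPerm A k) :=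
      fun k => (tetVertex_tetPerm A k).symm
    simp only [P, LinearMap.add_apply, LinearMap.id_apply, LinearMap.comp_apply, hf]
    rcases eq_or_ne m i with rfl | hm
    · simp only [hi]
      exact add_mem (add_mem (Submodule.mem_span_singleton_self _)
        (Submodule.mem_span_singleton_self _)) (Submodule.mem_span_singleton_self _)
    · rw [tetVertex_orbit_sum h3 h1 hi hm]
      exact neg_mem (Submodule.mem_span_singleton_self _)
  have hrange : LinearMap.range P ≤ ℝ ∙ tetVertex i := by
    rw [LinearMap.range_eq_map, ← span_range_tetVertex, Submodule.map_span_le]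
    exact forall_mem_range.mpr hP
  have hPx : P x = (3 : ℝ) • x := by
    simp only [P, LinearMap.add_apply, LinearMap.id_apply, LinearMap.comp_apply]
    change x + (A : E3 ≃ₗᵢ[ℝ] E3) x + (A : E3 ≃ₗᵢ[ℝ] E3) ((A : E3 ≃ₗᵢ[ℝ] E3) x) = _
    rw [hx, hx]
    module
  have h3x : (3 : ℝ) • x ∈ ℝ ∙ tetVertex i := hPx ▸ hrange (LinearMap.mem_range_self P x)
  simpa using Submodule.smul_mem _ (3⁻¹ : ℝ) h3x

lemma fixed_subset_of_tetPerm_apply_eq_self {A B : tetStab} (h3 : tetPerm A ^ 3 = 1)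
    (h1 : tetPerm A ≠ 1) {i : Fin 4} (hA : tetPerm A i = i) (hB : tetPerm B i = i) :
    {x | (A : E3 ≃ₗᵢ[ℝ] E3) x = x} ⊆ {x | (B : E3 ≃ₗᵢ[ℝ] E3) x = x} := fun x hx => by
  obtain ⟨c, rfl⟩ := Submodule.mem_span_singleton.mp
    (mem_span_tetVertex_of_apply_eq_self A h3 h1 hA hx)
  exact (map_smul _ c _).trans (congrArg _ (tetPerm_apply_eq_iff.mp hB))

lemma closure_eq_tetStab_and_card_eq {R S : E3 ≃ₗᵢ[ℝ] E3} (hR : R ∈ tetStab) (hS : S ∈ tetStab)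
    (htop : Subgroup.closure {tetPerm ⟨R, hR⟩, tetPerm ⟨S, hS⟩} = ⊤) :
    Subgroup.closure {R, S} = tetStab ∧ Nat.card tetStab = 24 := by
  have hmap : (Subgroup.closure {⟨R, hR⟩, ⟨S, hS⟩}).map tetPerm = ⊤ := by
    rw [MonoidHom.map_closure, image_pair, htop]
  have hsurj : Function.Surjective tetPerm :=
    MonoidHom.range_eq_top.mp (eq_top_mono (Subgroup.map_le_range _ _) hmap)
  refine ⟨?_, ?_⟩
  · have hclosure : Subgroup.closure {(⟨R, hR⟩ : tetStab), ⟨S, hS⟩} = ⊤ :=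
      Subgroup.map_injective tetPerm_injective <|
        hmap.trans (Subgroup.map_top_of_surjective _ hsurj).symm
    rw [← tetStab.range_subtype, MonoidHom.range_eq_map, ← hclosure, MonoidHom.map_closure,
      image_pair]
    rfl
  · rw [Nat.card_congr (MulEquiv.ofBijective tetPerm ⟨tetPerm_injective, hsurj⟩).toEquiv,
      Nat.card_perm, Nat.card_eq_fintype_card, Fintype.card_fin]
    rfl

end Tetrahedral

open Tetrahedral

theorem reflection_and_threefold_rotation_generate_tetrahedral_group_general
    (R S : E3 ≃ₗᵢ[ℝ] E3)
    -- R is a symmetry of the cube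
    (hRC : (⇑R) '' cubeV = cubeV)
    -- R is a plane reflection: an involution whose fixed-point set (mirror) is 2-dimensional
    (hR2 : R * R = 1)
    -- the mirror of R contains a vertex of C
    (hRvert : ∃ v ∈ cubeV, R v = v)
    -- S is a symmetry of the cube and a rotation of order 3
    (hSC : (⇑S) '' cubeV = cubeV)
    (hSord : orderOf S = 3)
    -- the rotation axis of S is not contained in the mirror of R
    (haxis : ¬ ({x : E3 | S x = x} ⊆ {x : E3 | R x = x})) :
    (Subgroup.closure {R, S} : Set (E3 ≃ₗᵢ[ℝ] E3)) = {A : E3 ≃ₗᵢ[ℝ] E3 | (⇑A) '' tetT = tetT} ∧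
      Nat.card {A : E3 ≃ₗᵢ[ℝ] E3 // (⇑A) '' tetT = tetT} = 24 := by
  have hR : R ∈ tetStab := image_tetT_of_fixes_vertex hRC hRvert
  have hS : S ∈ tetStab :=
    image_tetT_of_pow_three_eq_one hSC ((orderOf_eq_iff three_pos).mp hSord).1
  set r := tetPerm ⟨R, hR⟩
  set s := tetPerm ⟨S, hS⟩
  have hs : orderOf s = 3 := by
    rw [orderOf_injective tetPerm tetPerm_injective, Subgroup.orderOf_mk, hSord]
  have hs3 : s ^ 3 = 1 := by rw [← hs, pow_orderOf_eq_one]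
  have hs1 : s ≠ 1 := fun h => by simp [h] at hs
  obtain ⟨i, hsi⟩ := exists_apply_eq_self_of_pow_three_eq_one hs3 hs1
  have hri : r i ≠ i := fun hri => haxis (fixed_subset_of_tetPerm_apply_eq_self hs3 hs1 hsi hri)
  have hr : r = swap i (r i) := tetPerm_eq_swap (Subtype.ext hR2) hRvert hri
  have htop : Subgroup.closure {r, s} = ⊤ := by
    rw [hr]
    exact closure_swap_pow_three_eq_top hs3 hs1 hsi hri.symm
  obtain ⟨hclosure, hcard⟩ := closure_eq_tetStab_and_card_eq hR hS htop
  exact ⟨congrArg SetLike.coe hclosure, hcard⟩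

theorem reflection_and_threefold_rotation_generate_tetrahedral_group
    (R S : E3 ≃ₗᵢ[ℝ] E3)
    -- R is a symmetry of the cube
    (hRC : (⇑R) '' cubeV = cubeV)
    -- R is a plane reflection: an involution whose fixed-point set (mirror) is 2-dimensional
    (hR2 : R * R = 1)
    (hRmirror : ∃ L : Submodule ℝ E3, Module.finrank ℝ L = 2 ∧ {x : E3 | R x = x} = (L : Set E3))
    -- the mirror of R contains a vertex of C
    (hRvert : ∃ v ∈ cubeV, R v = v)
    -- S is a symmetry of the cube and a rotation of order 3
    (hSC : (⇑S) '' cubeV = cubeV)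
    (hSdet : LinearEquiv.det S.toLinearEquiv = 1)
    (hSord : orderOf S = 3)
    -- the rotation axis of S is not contained in the mirror of R
    (haxis : ¬ ({x : E3 | S x = x} ⊆ {x : E3 | R x = x})) :
    (Subgroup.closure {R, S} : Set (E3 ≃ₗᵢ[ℝ] E3)) = {A : E3 ≃ₗᵢ[ℝ] E3 | (⇑A) '' tetT = tetT} ∧
      Nat.card {A : E3 ≃ₗᵢ[ℝ] E3 // (⇑A) '' tetT = tetT} = 24 :=
  reflection_and_threefold_rotation_generate_tetrahedral_group_general R S hRC hR2 hRvert hSC hSord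
    haxis
end
end

section
/- Let W be the group of all isometries g of ℝ³ with g(ℤ³) = ℤ³ (the symmetry group [4,3,4] of the cubical tessellation {4,3,4}). Define the isometries T₀(x,y,z) = (1−x, y, z), T₁(x,y,z) = (y, x, z), T₂(x,y,z) = (x, z, y), T₃(x,y,z) = (x, y, −z). Then T₀, T₁, T₂, T₃ generate W, and the subgroup H of W generated by T₀T₃, T₁, T₂, and T₃T₂T₃ has index 2 in W; moreover T₃ ∉ H. -/
/-!
By the Mazur–Ulam theorem an isometry `g` of ℝ³ is affine, and if `g` preserves ℤ³ its linear
part sends each basis vector to an integer unit vector `±eⱼ`. Hence `W` consists exactly of the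
maps `x ↦ b + ε · (x ∘ σ⁻¹)` with `b ∈ ℤ³`, `ε ∈ {±1}³`, `σ ∈ S₃`, and `g ↦ ∏ εᵢ` is a character
of `W` taking the value `-1` at `T₃`. Its kernel contains the generators of `H` and is generated
by them: `T₁, T₂` give all coordinate permutations, `T₃T₂T₃ · T₂ = diag(1, -1, -1)` and its
conjugates give all even sign changes, and `T₀T₃` times an even sign change is the unit
translation along the first axis. So `H` is this kernel, of index 2 with `T₃ ∉ H`, and
`W = H ∪ H T₃` is generated by `T₀, …, T₃`.
-/

noncomputable section

/-- The set ℤ³ of integer points of ℝ³. -/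
def Z3 : Set E3 := {x | ∀ i, ∃ m : ℤ, x i = (m : ℝ)}

open Equiv

lemma units_intCast_mul_self (u : ℤˣ) : ((u : ℤ) : ℝ) * (u : ℤ) = 1 := by
  exact_mod_cast Int.units_coe_mul_self u

section IntLattice

variable {ι : Type*}

variable (ι) in
def intLattice : Set (EuclideanSpace ℝ ι) := {x | ∀ i, ∃ m : ℤ, x i = m}

lemma sub_mem_intLattice {x y : EuclideanSpace ℝ ι} (hx : x ∈ intLattice ι)
    (hy : y ∈ intLattice ι) : x - y ∈ intLattice ι := fun i => by
  obtain ⟨m, hm⟩ := hx i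
  obtain ⟨n, hn⟩ := hy i
  exact ⟨m - n, by simp [hm, hn]⟩

lemma exists_eq_single_of_sum_sq_eq_one [Fintype ι] [DecidableEq ι] {m : ι → ℤ}
    (h : ∑ k, m k ^ 2 = 1) : ∃ j, ∃ s : ℤˣ, m = Pi.single j (s : ℤ) := by
  obtain ⟨j, hj⟩ : ∃ j, m j ≠ 0 := by
    by_contra! h0
    simp [h0] at h
  have hsplit := Finset.add_sum_erase Finset.univ (fun k => m k ^ 2) (Finset.mem_univ j)
  have hj1 : 1 ≤ m j ^ 2 := one_le_sq_iff_one_le_abs _ |>.2 (Int.one_le_abs hj)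
  have hrest : ∑ k ∈ Finset.univ.erase j, m k ^ 2 = 0 :=
    le_antisymm (by linarith) (Finset.sum_nonneg fun _ _ => sq_nonneg _)
  have hmj : m j * m j = 1 := by nlinarith
  refine ⟨j, (IsUnit.of_mul_eq_one _ hmj).unit, funext fun k => ?_⟩
  by_cases hk : k = j
  · subst hk
    simp
  · rw [Pi.single_eq_of_ne hk]
    refine pow_eq_zero_iff two_ne_zero |>.1 ?_
    exact (Finset.sum_eq_zero_iff_of_nonneg fun _ _ => sq_nonneg _).1 hrest k
      (Finset.mem_erase.2 ⟨hk, Finset.mem_univ _⟩)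

lemma exists_eq_single_of_mem_intLattice_of_norm_eq_one [Fintype ι] [DecidableEq ι]
    {v : EuclideanSpace ℝ ι} (hv : v ∈ intLattice ι) (hnorm : ‖v‖ = 1) :
    ∃ j, ∃ s : ℤˣ, v = EuclideanSpace.single j ((s : ℤ) : ℝ) := by
  choose m hm using hv
  have hsq : ∑ k, m k ^ 2 = 1 := by
    have := congrArg (· ^ 2) hnorm
    simp only [EuclideanSpace.norm_eq, Real.norm_eq_abs, sq_abs, hm] at this
    rw [Real.sq_sqrt (by positivity)] at this
    exact_mod_cast this
  obtain ⟨j, s, rfl⟩ := exists_eq_single_of_sum_sq_eq_one hsq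
  refine ⟨j, s, ?_⟩
  ext k
  rw [hm, PiLp.single_apply]
  by_cases hk : k = j <;> simp [hk]

end IntLattice

section SignedPerm

variable {ι : Type*} [Fintype ι]

-- `x ↦ b + ε · (x ∘ σ⁻¹)` moves coordinate `j` to position `σ j`, so that
-- `σ ↦ signedPerm 0 1 σ` is a homomorphism rather than an anti-homomorphism.
def signedPerm (b : ι → ℤ) (ε : ι → ℤˣ) (σ : Perm ι) :
    EuclideanSpace ℝ ι ≃ᵢ EuclideanSpace ℝ ι where
  toFun x := WithLp.toLp 2 fun i => b i + (ε i : ℤ) * x (σ⁻¹ i)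
  invFun y := WithLp.toLp 2 fun j => (ε (σ j) : ℤ) * (y (σ j) - b (σ j))
  left_inv x := by
    ext j
    simp only [Perm.coe_inv, Equiv.symm_apply_apply]
    linear_combination x j * units_intCast_mul_self (ε (σ j))
  right_inv y := by
    ext i
    simp only [Perm.coe_inv, Equiv.apply_symm_apply]
    linear_combination (y i - b i) * units_intCast_mul_self (ε i)
  isometry_toFun := by
    refine Isometry.of_dist_eq fun x y => ?_
    simp only [EuclideanSpace.dist_eq, Real.dist_eq, add_sub_add_left_eq_sub, ← mul_sub, abs_mul,
      abs_unit_intCast, one_mul]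
    rw [← Equiv.sum_comp σ]
    simp

@[simp]
lemma signedPerm_apply (b : ι → ℤ) (ε : ι → ℤˣ) (σ : Perm ι) (x : EuclideanSpace ℝ ι) (i : ι) :
    signedPerm b ε σ x i = b i + (ε i : ℤ) * x (σ⁻¹ i) := rfl

lemma signedPerm_mul (b b' : ι → ℤ) (ε ε' : ι → ℤˣ) (σ σ' : Perm ι) :
    signedPerm b ε σ * signedPerm b' ε' σ' =
      signedPerm (fun i => b i + ε i * b' (σ⁻¹ i)) (fun i => ε i * ε' (σ⁻¹ i)) (σ * σ') := by
  ext x i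
  simp only [IsometryEquiv.mul_apply, signedPerm_apply, mul_inv_rev, Perm.mul_apply]
  push_cast
  ring

@[simp]
lemma signedPerm_one : signedPerm (0 : ι → ℤ) 1 1 = 1 := by
  ext x i
  simp only [signedPerm_apply, inv_one, Perm.one_apply]
  simp

lemma signedPerm_inv (b : ι → ℤ) (ε : ι → ℤˣ) (σ : Perm ι) :
    (signedPerm b ε σ)⁻¹ = signedPerm (fun i => -(ε (σ i) * b (σ i))) (fun i => ε (σ i)) σ⁻¹ := by
  ext x i
  change ((ε (σ i) : ℤ) : ℝ) * (x (σ i) - b (σ i)) = _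
  simp only [signedPerm_apply, inv_inv]
  push_cast
  ring

lemma signs_eq_of_signedPerm_eq {b b' : ι → ℤ} {ε ε' : ι → ℤˣ} {σ σ' : Perm ι}
    (h : signedPerm b ε σ = signedPerm b' ε' σ') : ε = ε' := by
  have hb : ∀ i, (b i : ℝ) = b' i := fun i => by
    simpa using congr($h 0 i)
  funext i
  have := congr($h (WithLp.toLp 2 fun _ => 1) i)
  simp only [signedPerm_apply, mul_one, hb] at this
  exact Units.ext (by exact_mod_cast add_left_cancel this)

lemma signedPerm_mapsTo_intLattice (b : ι → ℤ) (ε : ι → ℤˣ) (σ : Perm ι) :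
    Set.MapsTo (signedPerm b ε σ) (intLattice ι) (intLattice ι) := by
  intro x hx i
  obtain ⟨m, hm⟩ := hx (σ⁻¹ i)
  exact ⟨b i + ε i * m, by rw [signedPerm_apply, hm]; push_cast; rfl⟩

variable (ι) in
def latticeStabilizer : Subgroup (EuclideanSpace ℝ ι ≃ᵢ EuclideanSpace ℝ ι) where
  carrier := {g | ⇑g '' intLattice ι = intLattice ι}
  one_mem' := Set.image_id _
  mul_mem' {g h} (hg : g '' _ = _) (hh : h '' _ = _) := by
    rw [Set.mem_ofPred_eq, IsometryEquiv.coe_mul, Set.image_comp, hh, hg]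
  inv_mem' {g} (hg : g '' _ = _) := by
    change g.symm '' _ = _
    conv_lhs => rw [← hg]
    exact g.toEquiv.symm_image_image _

lemma signedPerm_mem_latticeStabilizer (b : ι → ℤ) (ε : ι → ℤˣ) (σ : Perm ι) :
    signedPerm b ε σ ∈ latticeStabilizer ι := by
  refine (signedPerm_mapsTo_intLattice b ε σ).image_subset.antisymm fun y hy => ?_
  refine ⟨(signedPerm b ε σ)⁻¹ y, ?_, IsometryEquiv.apply_inv_self _ _⟩
  rw [signedPerm_inv]
  exact signedPerm_mapsTo_intLattice _ _ _ hy

-- "Even" refers to an even number of sign changes `εᵢ = -1`, not to orientation.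
variable (ι) in
def evenSignedPerms : Subgroup (EuclideanSpace ℝ ι ≃ᵢ EuclideanSpace ℝ ι) where
  carrier := {g | ∃ b ε σ, signedPerm b ε σ = g ∧ ∏ i, ε i = 1}
  one_mem' := ⟨0, 1, 1, signedPerm_one, Finset.prod_const_one⟩
  mul_mem' := by
    rintro _ _ ⟨b, ε, σ, rfl, h⟩ ⟨b', ε', σ', rfl, h'⟩
    refine ⟨_, _, _, (signedPerm_mul b b' ε ε' σ σ').symm, ?_⟩
    rw [Finset.prod_mul_distrib, Equiv.prod_comp σ⁻¹ ε', h, h', mul_one]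
  inv_mem' := by
    rintro _ ⟨b, ε, σ, rfl, h⟩
    exact ⟨_, _, _, (signedPerm_inv b ε σ).symm, by rw [Equiv.prod_comp σ ε, h]⟩

lemma signedPerm_mem_evenSignedPerms_iff {b : ι → ℤ} {ε : ι → ℤˣ} {σ : Perm ι} :
    signedPerm b ε σ ∈ evenSignedPerms ι ↔ ∏ i, ε i = 1 := by
  refine ⟨fun ⟨b', ε', σ', h, hε'⟩ => ?_, fun h => ⟨b, ε, σ, rfl, h⟩⟩
  rwa [← signs_eq_of_signedPerm_eq h]

lemma exists_signedPerm_eq_of_mem_latticeStabilizer [DecidableEq ι]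
    {g : EuclideanSpace ℝ ι ≃ᵢ EuclideanSpace ℝ ι} (hg : g ∈ latticeStabilizer ι) :
    ∃ b ε σ, signedPerm b ε σ = g := by
  have hmaps : ∀ x ∈ intLattice ι, g x ∈ intLattice ι :=
    fun x hx => hg ▸ Set.mem_image_of_mem g hx
  have h0 : (0 : EuclideanSpace ℝ ι) ∈ intLattice ι := fun i => ⟨0, by simp⟩
  set A := g.toRealAffineIsometryEquiv.linearIsometryEquiv
  have hA : ∀ x, g x = A x + g 0 := fun x => by
    simpa using g.toRealAffineIsometryEquiv.map_vadd 0 x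
  choose b hb using hmaps 0 h0
  have hbasis (j : ι) : ∃ t, ∃ s : ℤˣ,
      A (EuclideanSpace.single j 1) = EuclideanSpace.single t ((s : ℤ) : ℝ) := by
    refine exists_eq_single_of_mem_intLattice_of_norm_eq_one ?_ (by simp)
    rw [eq_sub_of_add_eq (hA _).symm]
    exact sub_mem_intLattice (hmaps _ fun i => ⟨if i = j then 1 else 0, by simp⟩) (hmaps 0 h0)
  choose t s hts using hbasis
  have ht : Function.Injective t := by
    intro j k hjk
    have := A.inner_map_map (EuclideanSpace.single j 1) (EuclideanSpace.single k 1)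
    rw [hts, hts, hjk, EuclideanSpace.inner_single_left, EuclideanSpace.inner_single_left] at this
    by_contra hne
    simp [Ne.symm hne] at this
  set σ := Equiv.ofBijective t ht.bijective_of_finite
  refine ⟨b, fun i => s (σ⁻¹ i), σ, ?_⟩
  ext x i
  have hσ : t (σ⁻¹ i) = i := σ.apply_symm_apply i
  have hcoord : x (σ⁻¹ i) = s (σ⁻¹ i) * A x i := by
    have := A.inner_map_map (EuclideanSpace.single (σ⁻¹ i) 1) x
    rw [hts, hσ, EuclideanSpace.inner_single_left, EuclideanSpace.inner_single_left] at this
    simpa using this.symm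
  rw [signedPerm_apply, hA, PiLp.add_apply, hb, hcoord]
  linear_combination (A x i) * units_intCast_mul_self (s (σ⁻¹ i))

lemma mul_mem_evenSignedPerms_iff [DecidableEq ι] {g : EuclideanSpace ℝ ι ≃ᵢ EuclideanSpace ℝ ι}
    (hg : g ∈ latticeStabilizer ι) {b : ι → ℤ} {ε : ι → ℤˣ} {σ : Perm ι} (hε : ∏ i, ε i = -1) :
    g * signedPerm b ε σ ∈ evenSignedPerms ι ↔ g ∉ evenSignedPerms ι := by
  obtain ⟨b', ε', σ', rfl⟩ := exists_signedPerm_eq_of_mem_latticeStabilizer hg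
  rw [signedPerm_mul, signedPerm_mem_evenSignedPerms_iff, signedPerm_mem_evenSignedPerms_iff,
    Finset.prod_mul_distrib, Equiv.prod_comp σ'⁻¹ ε, hε]
  rcases Int.units_eq_one_or (∏ i, ε' i) with h | h <;> rw [h] <;> decide

lemma relIndex_evenSignedPerms_latticeStabilizer [DecidableEq ι] [Nonempty ι] :
    (evenSignedPerms ι).relIndex (latticeStabilizer ι) = 2 := by
  obtain ⟨j⟩ := ‹Nonempty ι›
  have hr : ∏ i, Pi.mulSingle j (-1 : ℤˣ) i = -1 := Fintype.prod_pi_mulSingle' _ _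
  refine Subgroup.index_eq_two_iff.2
    ⟨⟨signedPerm 0 (Pi.mulSingle j (-1)) 1, signedPerm_mem_latticeStabilizer _ _ _⟩, fun g => ?_⟩
  rw [Subgroup.mem_subgroupOf, Subgroup.mem_subgroupOf, xor_iff_iff_not]
  exact mul_mem_evenSignedPerms_iff g.2 hr

lemma signedPerm_conj (τ : Perm ι) (b : ι → ℤ) (ε : ι → ℤˣ) :
    signedPerm 0 1 τ * signedPerm b ε 1 * (signedPerm 0 1 τ)⁻¹ =
      signedPerm (b ∘ ⇑τ⁻¹) (ε ∘ ⇑τ⁻¹) 1 := by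
  rw [signedPerm_inv, signedPerm_mul, signedPerm_mul]
  congr 1 <;> ext <;> simp

lemma signedPerm_eq_mul (b : ι → ℤ) (ε : ι → ℤˣ) (σ : Perm ι) :
    signedPerm b ε σ = signedPerm b 1 1 * signedPerm 0 ε 1 * signedPerm 0 1 σ := by
  rw [signedPerm_mul, signedPerm_mul]
  congr 1 <;> ext <;> simp

variable (ι) in
def permToSignedPerm : Perm ι →* (EuclideanSpace ℝ ι ≃ᵢ EuclideanSpace ℝ ι) where
  toFun σ := signedPerm 0 1 σ
  map_one' := signedPerm_one
  map_mul' σ τ := by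
    rw [signedPerm_mul]
    congr 1

variable (ι) in
def translationToSignedPerm :
    Multiplicative (ι → ℤ) →* (EuclideanSpace ℝ ι ≃ᵢ EuclideanSpace ℝ ι) where
  toFun b := signedPerm b.toAdd 1 1
  map_one' := signedPerm_one
  map_mul' b c := by
    rw [signedPerm_mul]
    congr 1
    ext
    simp

lemma signedPerm_translation_mem_of_single_mem [DecidableEq ι]
    {H : Subgroup (EuclideanSpace ℝ ι ≃ᵢ EuclideanSpace ℝ ι)}
    (h : ∀ j, signedPerm (Pi.single j 1) 1 1 ∈ H) (b : ι → ℤ) : signedPerm b 1 1 ∈ H := by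
  let S := (H.comap (translationToSignedPerm ι)).toAddSubgroup'
  have hS : ∀ j, Pi.single j 1 ∈ S := h
  have hb : b ∈ S := by
    rw [pi_eq_sum_univ' b]
    exact sum_mem fun j _ => zsmul_mem (hS j) _
  exact hb

lemma signedPerm_perm_mem_of_adjacent_swap_mem {n : ℕ}
    {H : Subgroup (EuclideanSpace ℝ (Fin (n + 1)) ≃ᵢ EuclideanSpace ℝ (Fin (n + 1)))}
    (h : ∀ i : Fin n, signedPerm 0 1 (swap i.castSucc i.succ) ∈ H) (σ : Perm (Fin (n + 1))) :
    signedPerm 0 1 σ ∈ H := by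
  have hσ : σ ∈ Subgroup.closure (Set.range fun i : Fin n => swap i.castSucc i.succ) := by
    rw [Subgroup.closure_eq_top_of_mclosure_eq_top (Perm.mclosure_swap_castSucc_succ n)]
    trivial
  exact (Subgroup.closure_le (H.comap (permToSignedPerm _))).2 (Set.range_subset_iff.2 h) hσ

lemma evenSignedPerms_le {H : Subgroup (EuclideanSpace ℝ ι ≃ᵢ EuclideanSpace ℝ ι)}
    (htrans : ∀ b, signedPerm b 1 1 ∈ H)
    (hsigns : ∀ ε : ι → ℤˣ, ∏ i, ε i = 1 → signedPerm 0 ε 1 ∈ H)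
    (hperm : ∀ σ, signedPerm 0 1 σ ∈ H) : evenSignedPerms ι ≤ H := by
  rintro _ ⟨b, ε, σ, rfl, hε⟩
  rw [signedPerm_eq_mul]
  exact mul_mem (mul_mem (htrans b) (hsigns ε hε)) (hperm σ)

end SignedPerm

-- `T₀, T₁, T₂, T₃`: the reflections in the planes `x = 1/2`, `x = y`, `y = z`, `z = 0`.
def reflXHalf : E3 ≃ᵢ E3 := signedPerm (Pi.single 0 1) ![-1, 1, 1] 1
def reflXY : E3 ≃ᵢ E3 := signedPerm 0 1 (swap 0 1)
def reflYZ : E3 ≃ᵢ E3 := signedPerm 0 1 (swap 1 2)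
def reflZ : E3 ≃ᵢ E3 := signedPerm 0 ![1, 1, -1] 1

lemma reflXHalf_apply (x : E3) : reflXHalf x = pt (1 - x 0) (x 1) (x 2) := by
  ext i
  simp only [reflXHalf, signedPerm_apply, inv_one]
  fin_cases i <;> simp [pt, sub_eq_add_neg]

lemma reflXY_apply (x : E3) : reflXY x = pt (x 1) (x 0) (x 2) := by
  ext i
  simp only [reflXY, signedPerm_apply, swap_inv]
  fin_cases i <;> simp [pt, swap_apply_of_ne_of_ne]

lemma reflYZ_apply (x : E3) : reflYZ x = pt (x 0) (x 2) (x 1) := by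
  ext i
  simp only [reflYZ, signedPerm_apply, swap_inv]
  fin_cases i <;> simp [pt, swap_apply_of_ne_of_ne]

lemma reflZ_apply (x : E3) : reflZ x = pt (x 0) (x 1) (-(x 2)) := by
  ext i
  simp only [reflZ, signedPerm_apply, inv_one]
  fin_cases i <;> simp [pt]

lemma signedPerm_signs_mem_of_flip_mem {H : Subgroup (E3 ≃ᵢ E3)} (hperm : ∀ σ, signedPerm 0 1 σ ∈ H)
    (hflip : signedPerm 0 ![1, -1, -1] 1 ∈ H) (ε : Fin 3 → ℤˣ) (hε : ∏ i, ε i = 1) :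
    signedPerm 0 ε 1 ∈ H := by
  have hconj (τ : Perm (Fin 3)) : signedPerm 0 (![1, -1, -1] ∘ ⇑τ⁻¹) 1 ∈ H := by
    simpa [signedPerm_conj] using mul_mem (mul_mem (hperm τ) hflip) (inv_mem (hperm τ))
  obtain rfl | rfl | rfl | rfl : ε = 1 ∨ ε = ![1, -1, -1] ∨ ε = ![1, -1, -1] ∘ ⇑(swap 0 1)⁻¹ ∨
      ε = ![1, -1, -1] ∘ ⇑(swap 0 2)⁻¹ := by
    revert ε hε
    decide
  · exact signedPerm_one (ι := Fin 3) ▸ one_mem H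
  · exact hflip
  · exact hconj _
  · exact hconj _

lemma closure_evenGenerators_eq_evenSignedPerms :
    Subgroup.closure {reflXHalf * reflZ, reflXY, reflYZ, reflZ * reflYZ * reflZ} =
      evenSignedPerms (Fin 3) := by
  set H := Subgroup.closure {reflXHalf * reflZ, reflXY, reflYZ, reflZ * reflYZ * reflZ}
  have hXZ : reflXHalf * reflZ = signedPerm (Pi.single 0 1) ![-1, 1, -1] 1 := by
    rw [reflXHalf, reflZ, signedPerm_mul]
    congr 1 <;> decide
  have hZYZ : reflZ * reflYZ * reflZ = signedPerm 0 ![1, -1, -1] (swap 1 2) := by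
    rw [reflZ, reflYZ, signedPerm_mul, signedPerm_mul]
    congr 1 <;> decide
  have hperm : ∀ σ, signedPerm 0 1 σ ∈ H := signedPerm_perm_mem_of_adjacent_swap_mem fun i => by
    fin_cases i
    exacts [Subgroup.subset_closure (by simp [reflXY]), Subgroup.subset_closure (by simp [reflYZ])]
  have hsigns : ∀ ε : Fin 3 → ℤˣ, ∏ i, ε i = 1 → signedPerm 0 ε 1 ∈ H := by
    refine signedPerm_signs_mem_of_flip_mem hperm ?_
    have : signedPerm 0 ![1, -1, -1] 1 = reflZ * reflYZ * reflZ * reflYZ := by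
      rw [hZYZ, reflYZ, signedPerm_mul]
      congr 1 <;> decide
    rw [this]
    exact mul_mem (Subgroup.subset_closure (by simp)) (Subgroup.subset_closure (by simp))
  have htrans : ∀ b, signedPerm b 1 1 ∈ H := by
    have h0 : signedPerm (Pi.single 0 1) 1 1 ∈ H := by
      have : signedPerm (Pi.single 0 1) 1 1 =
          reflXHalf * reflZ * signedPerm 0 ![-1, 1, -1] 1 := by
        rw [hXZ, signedPerm_mul]
        congr 1 <;> decide
      rw [this]
      exact mul_mem (Subgroup.subset_closure (by simp)) (hsigns _ (by decide))
    refine signedPerm_translation_mem_of_single_mem fun j => ?_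
    have hj : (Pi.single 0 1 : Fin 3 → ℤ) ∘ ⇑(swap 0 j)⁻¹ = Pi.single j 1 := by
      simp [Pi.single_comp_equiv]
    rw [← hj, ← Pi.one_comp ⇑(swap 0 j)⁻¹, ← signedPerm_conj]
    exact mul_mem (mul_mem (hperm _) h0) (inv_mem (hperm _))
  refine le_antisymm ((Subgroup.closure_le _).2 ?_) (evenSignedPerms_le htrans hsigns hperm)
  rintro _ (rfl | rfl | rfl | rfl)
  · rw [hXZ]
    exact signedPerm_mem_evenSignedPerms_iff.2 (by decide)
  · exact signedPerm_mem_evenSignedPerms_iff.2 (by decide)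
  · exact signedPerm_mem_evenSignedPerms_iff.2 (by decide)
  · rw [hZYZ]
    exact signedPerm_mem_evenSignedPerms_iff.2 (by decide)

lemma reflZ_not_mem_evenSignedPerms : reflZ ∉ evenSignedPerms (Fin 3) := by
  rw [reflZ, signedPerm_mem_evenSignedPerms_iff]
  decide

lemma closure_refls_eq_latticeStabilizer :
    Subgroup.closure {reflXHalf, reflXY, reflYZ, reflZ} = latticeStabilizer (Fin 3) := by
  set W := Subgroup.closure {reflXHalf, reflXY, reflYZ, reflZ}
  have hZ : reflZ ∈ W := Subgroup.subset_closure (by simp)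
  have hle : evenSignedPerms (Fin 3) ≤ W := by
    rw [← closure_evenGenerators_eq_evenSignedPerms, Subgroup.closure_le]
    have h : ∀ g ∈ ({reflXHalf, reflXY, reflYZ, reflZ} : Set (E3 ≃ᵢ E3)), g ∈ W :=
      fun g hg => Subgroup.subset_closure hg
    rintro _ (rfl | rfl | rfl | rfl)
    · exact mul_mem (h _ (by simp)) hZ
    · exact h _ (by simp)
    · exact h _ (by simp)
    · exact mul_mem (mul_mem hZ (h _ (by simp))) hZ
  refine le_antisymm ((Subgroup.closure_le _).2 ?_) fun g hg => ?_
  · rintro _ (rfl | rfl | rfl | rfl) <;> exact signedPerm_mem_latticeStabilizer _ _ _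
  by_cases hg' : g ∈ evenSignedPerms (Fin 3)
  · exact hle hg'
  · have hodd : ∏ i, ![(1 : ℤˣ), 1, -1] i = -1 := by decide
    have hgZ := hle ((mul_mem_evenSignedPerms_iff (b := 0) (σ := 1) hg hodd).2 hg')
    simpa [reflZ] using mul_mem hgZ (inv_mem hZ)

theorem index_two_subgroup_of_cubical_tessellation_group
    (T0 T1 T2 T3 : E3 ≃ᵢ E3)
    (hT0 : ∀ x : E3, T0 x = pt (1 - x 0) (x 1) (x 2))
    (hT1 : ∀ x : E3, T1 x = pt (x 1) (x 0) (x 2))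
    (hT2 : ∀ x : E3, T2 x = pt (x 0) (x 2) (x 1))
    (hT3 : ∀ x : E3, T3 x = pt (x 0) (x 1) (-(x 2))) :
    (Subgroup.closure {T0, T1, T2, T3} : Set (E3 ≃ᵢ E3)) = {g : E3 ≃ᵢ E3 | (⇑g) '' Z3 = Z3} ∧
    (Subgroup.closure {T0 * T3, T1, T2, T3 * T2 * T3}).relIndex
        (Subgroup.closure {T0, T1, T2, T3}) = 2 ∧
    T3 ∉ Subgroup.closure {T0 * T3, T1, T2, T3 * T2 * T3} := by
  obtain rfl : T0 = reflXHalf := IsometryEquiv.ext fun x => (hT0 x).trans (reflXHalf_apply x).symm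
  obtain rfl : T1 = reflXY := IsometryEquiv.ext fun x => (hT1 x).trans (reflXY_apply x).symm
  obtain rfl : T2 = reflYZ := IsometryEquiv.ext fun x => (hT2 x).trans (reflYZ_apply x).symm
  obtain rfl : T3 = reflZ := IsometryEquiv.ext fun x => (hT3 x).trans (reflZ_apply x).symm
  rw [closure_evenGenerators_eq_evenSignedPerms, closure_refls_eq_latticeStabilizer]
  exact ⟨rfl, relIndex_evenSignedPerms_latticeStabilizer, reflZ_not_mem_evenSignedPerms⟩
end
end

section
/- Let H be the subgroup of isometries of ℝ³ generated by T₀T₃, T₁, T₂, and T₃T₂T₃, where T₀(x,y,z) = (1−x, y, z), T₁(x,y,z) = (y, x, z), T₂(x,y,z) = (x, z, y), T₃(x,y,z) = (x, y, −z). Then H contains every translation x ↦ x + w with w ∈ ℤ³; that is, the full translation subgroup of the symmetry group of the cubical tessellation {4,3,4} is contained in H. -/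
/- STATEMENT 7: The subgroup H of isometries of ℝ³ generated by T₀T₃, T₁, T₂, T₃T₂T₃, with
T₀(x,y,z) = (1−x, y, z), T₁(x,y,z) = (y, x, z), T₂(x,y,z) = (x, z, y), T₃(x,y,z) = (x, y, −z),
contains every translation x ↦ x + w with w ∈ ℤ³. -/

noncomputable section

/-!
The word `T₀T₃ · T₁ · T₂ · T₃T₂T₃ · T₁` in the generators of `H` is the translation by `e₀`.
The coordinate swaps `T₁` and `T₂` are linear and lie in `H`, and conjugating a translation by a
linear isometry translates by the image vector, so `e₁ = T₁ e₀` and `e₂ = T₂ e₁` are translation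
vectors of `H` too. Translation vectors form an additive group, and `e₀, e₁, e₂` generate `ℤ³`.
-/

namespace IsometryEquiv

variable {E : Type*} [AddGroup E] [PseudoEMetricSpace E] [IsIsometricVAdd Eᵃᵒᵖ E]

lemma addRight_zero : addRight (0 : E) = 1 := by
  ext x
  simp

lemma addRight_add (u v : E) : addRight (u + v) = addRight v * addRight u := by
  ext x
  simp [add_assoc]

lemma addRight_neg (v : E) : addRight (-v) = (addRight v)⁻¹ := by
  rw [← addRight_symm]
  rfl

lemma mul_addRight_mul_inv (σ : E ≃ᵢ E) (hσ : ∀ x y, σ (x + y) = σ x + σ y) (v : E) :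
    σ * addRight v * σ⁻¹ = addRight (σ v) := by
  ext x
  simp [hσ]

end IsometryEquiv

open IsometryEquiv

namespace Subgroup

variable {E : Type*} [AddGroup E] [PseudoEMetricSpace E] [IsIsometricVAdd Eᵃᵒᵖ E]

def translationVectors (H : Subgroup (E ≃ᵢ E)) : AddSubgroup E where
  carrier := {v | addRight v ∈ H}
  zero_mem' := by simp [addRight_zero]
  add_mem' {u v} hu hv := by simpa [addRight_add] using H.mul_mem hv hu
  neg_mem' {v} hv := by simpa [addRight_neg] using H.inv_mem hv

lemma mem_translationVectors {H : Subgroup (E ≃ᵢ E)} {v : E} :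
    v ∈ H.translationVectors ↔ addRight v ∈ H := Iff.rfl

lemma apply_mem_translationVectors {H : Subgroup (E ≃ᵢ E)} {σ : E ≃ᵢ E} (hσH : σ ∈ H)
    (hσ : ∀ x y, σ (x + y) = σ x + σ y) {v : E} (hv : v ∈ H.translationVectors) :
    σ v ∈ H.translationVectors := by
  rw [mem_translationVectors, ← mul_addRight_mul_inv σ hσ]
  exact H.mul_mem (H.mul_mem hσH hv) (H.inv_mem hσH)

end Subgroup

lemma EuclideanSpace.mem_of_forall_single_one_mem {ι : Type*} [Fintype ι] [DecidableEq ι]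
    (K : AddSubgroup (EuclideanSpace ℝ ι)) (hK : ∀ i, EuclideanSpace.single i 1 ∈ K)
    {w : EuclideanSpace ℝ ι} (hw : ∀ i, ∃ m : ℤ, w i = m) : w ∈ K := by
  choose m hm using hw
  have hsum : w = ∑ i, m i • EuclideanSpace.single i (1 : ℝ) := by
    ext j
    simp [hm, Pi.single_apply]
  rw [hsum]
  exact K.sum_mem fun i _ => K.zsmul_mem (hK i) (m i)

lemma pt_add (a b c a' b' c' : ℝ) : pt a b c + pt a' b' c' = pt (a + a') (b + b') (c + c') := by
  ext i; fin_cases i <;> rfl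

lemma map_add_of_apply_eq_pt {σ : E3 ≃ᵢ E3} {i j k : Fin 3} (hσ : ∀ x, σ x = pt (x i) (x j) (x k))
    (x y : E3) : σ (x + y) = σ x + σ y := by
  simp only [hσ, pt_add, PiLp.add_apply]

lemma generator_word_eq_addRight_single_zero {T0 T1 T2 T3 : E3 ≃ᵢ E3}
    (hT0 : ∀ x : E3, T0 x = pt (1 - x 0) (x 1) (x 2))
    (hT1 : ∀ x : E3, T1 x = pt (x 1) (x 0) (x 2))
    (hT2 : ∀ x : E3, T2 x = pt (x 0) (x 2) (x 1))
    (hT3 : ∀ x : E3, T3 x = pt (x 0) (x 1) (-(x 2))) :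
    T0 * T3 * T1 * T2 * (T3 * T2 * T3) * T1 = addRight (EuclideanSpace.single 0 1) := by
  ext x i
  fin_cases i <;> simp [hT0, hT1, hT2, hT3, pt, add_comm]

theorem integer_translations_in_H
    (T0 T1 T2 T3 : E3 ≃ᵢ E3)
    (hT0 : ∀ x : E3, T0 x = pt (1 - x 0) (x 1) (x 2))
    (hT1 : ∀ x : E3, T1 x = pt (x 1) (x 0) (x 2))
    (hT2 : ∀ x : E3, T2 x = pt (x 0) (x 2) (x 1))
    (hT3 : ∀ x : E3, T3 x = pt (x 0) (x 1) (-(x 2)))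
    (w : E3) (hw : ∀ i, ∃ m : ℤ, w i = (m : ℝ)) :
    ∃ g ∈ Subgroup.closure {T0 * T3, T1, T2, T3 * T2 * T3}, ∀ x : E3, g x = x + w := by
  set H := Subgroup.closure {T0 * T3, T1, T2, T3 * T2 * T3}
  have hA : T0 * T3 ∈ H := Subgroup.subset_closure (by simp)
  have h1 : T1 ∈ H := Subgroup.subset_closure (by simp)
  have h2 : T2 ∈ H := Subgroup.subset_closure (by simp)
  have hB : T3 * T2 * T3 ∈ H := Subgroup.subset_closure (by simp)
  have e0 : EuclideanSpace.single 0 1 ∈ H.translationVectors := by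
    rw [Subgroup.mem_translationVectors, ← generator_word_eq_addRight_single_zero hT0 hT1 hT2 hT3]
    exact H.mul_mem (H.mul_mem (H.mul_mem (H.mul_mem hA h1) h2) hB) h1
  have e1 : EuclideanSpace.single 1 1 ∈ H.translationVectors := by
    have hT1e0 : T1 (EuclideanSpace.single 0 1) = EuclideanSpace.single 1 1 := by
      ext i; fin_cases i <;> simp [hT1, pt]
    rw [← hT1e0]
    exact Subgroup.apply_mem_translationVectors h1 (map_add_of_apply_eq_pt hT1) e0
  have e2 : EuclideanSpace.single 2 1 ∈ H.translationVectors := by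
    have hT2e1 : T2 (EuclideanSpace.single 1 1) = EuclideanSpace.single 2 1 := by
      ext i; fin_cases i <;> simp [hT2, pt]
    rw [← hT2e1]
    exact Subgroup.apply_mem_translationVectors h2 (map_add_of_apply_eq_pt hT2) e1
  have hwH : w ∈ H.translationVectors :=
    EuclideanSpace.mem_of_forall_single_one_mem _ (fun i => by fin_cases i <;> assumption) hw
  exact ⟨addRight w, hwH, addRight_apply w⟩
end
end

section
/- Let H be the subgroup of isometries of ℝ³ generated by T₀T₃, T₁, T₂, and T₃T₂T₃, where T₀(x,y,z) = (1−x, y, z), T₁(x,y,z) = (y, x, z), T₂(x,y,z) = (x, z, y), T₃(x,y,z) = (x, y, −z). Let D be the set of flags of the 2-skeleton of the cubical tessellation {4,3,4}, encoded as triples (p, q, s) of points of ℝ³ with p ∈ ℤ³, q = p + (ε/2)uᵢ and s = q + (δ/2)uⱼ, where u₁, u₂, u₃ is the standard basis of ℝ³, i ≠ j, and ε, δ ∈ {1, −1}. Then H, acting componentwise on triples, acts simply transitively on D: every element of H maps D to D, and for any two flags in D there is exactly one element of H carrying the first to the second. -/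
/- STATEMENT 8: The subgroup H of isometries of ℝ³ generated by T₀T₃, T₁, T₂, T₃T₂T₃
(with T₀, T₁, T₂, T₃ as in the symmetry group of the cubical tessellation {4,3,4}) acts
simply transitively, componentwise on triples, on the set D of flags (p, q, s) of the
2-skeleton of {4,3,4}: p ∈ ℤ³, q = p + (ε/2)uᵢ, s = q + (δ/2)uⱼ with i ≠ j, ε, δ ∈ {1,−1}. -/

noncomputable section

/-- The flags of the 2-skeleton of the cubical tessellation, encoded as triples
(vertex, edge midpoint, square face center). -/
def Flags : Set (E3 × E3 × E3) :=
  {d | ∃ (i j : Fin 3) (ε δ : ℝ), i ≠ j ∧ (ε = 1 ∨ ε = -1) ∧ (δ = 1 ∨ δ = -1) ∧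
    (∀ k, ∃ m : ℤ, d.1 k = (m : ℝ)) ∧
    d.2.1 = d.1 + (ε / 2) • EuclideanSpace.single i (1 : ℝ) ∧
    d.2.2 = d.2.1 + (δ / 2) • EuclideanSpace.single j (1 : ℝ)}

/-!
Every generator of `H`, hence every element, acts in coordinates as `x ↦ (s k * x (σ k) + t k)ₖ`
for a permutation `σ`, integer signs `s` with product `1` and an integer translation `t`. Such
maps send flags to flags, and conversely `H` contains each of them: the permutations come from
`T₁, T₂`, the even sign changes from `T₂ (T₃ T₂ T₃)` and its conjugate by `T₁`, and `T₀ T₃`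
composed with a sign change is a unit translation. A map of this form is pinned down by its
value on the base flag `(0, ½u₁, ½u₁ + ½u₂)`: the flag fixes `σ` and `s` on two coordinates,
the product condition fixes the third sign, and the vertex fixes `t`. So `g ↦ g • base` is a
bijection from `H` onto the flags, which is simple transitivity.
-/

instance IsometryEquiv.applyMulAction {α : Type*} [PseudoEMetricSpace α] :
    MulAction (α ≃ᵢ α) α where
  smul g x := g x
  one_smul _ := rfl
  mul_smul _ _ _ := rfl

@[simp]
theorem IsometryEquiv.smul_def {α : Type*} [PseudoEMetricSpace α] (g : α ≃ᵢ α) (x : α) :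
    g • x = g x :=
  rfl

theorem Subgroup.existsUnique_smul_eq_of_forall_mem_orbit {G α : Type*} [Group G]
    [MulAction G α] {H : Subgroup G} {S : Set α} {x₀ : α}
    (horbit : ∀ x ∈ S, ∃ g ∈ H, g • x₀ = x) (hfree : ∀ g ∈ H, g • x₀ = x₀ → g = 1)
    {x y : α} (hx : x ∈ S) (hy : y ∈ S) : ∃! g, g ∈ H ∧ g • x = y := by
  obtain ⟨a, ha, rfl⟩ := horbit x hx
  obtain ⟨b, hb, rfl⟩ := horbit y hy
  refine ⟨b * a⁻¹, ⟨mul_mem hb (inv_mem ha), by rw [smul_smul, inv_mul_cancel_right]⟩, ?_⟩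
  rintro g ⟨hg, hgx⟩
  have hfix : b⁻¹ * g * a = 1 := hfree _ (mul_mem (mul_mem (inv_mem hb) hg) ha) <| by
    rw [mul_smul, mul_smul, hgx, inv_smul_smul]
  calc g = b * (b⁻¹ * g * a) * a⁻¹ := by group
    _ = b * a⁻¹ := by rw [hfix, mul_one]

namespace CubicTessellation

section SignedPerm

variable {ι : Type*} [Fintype ι]

def HasSignedPermForm (g : EuclideanSpace ℝ ι ≃ᵢ EuclideanSpace ℝ ι) (σ : Equiv.Perm ι)
    (s t : ι → ℤ) : Prop :=
  ∀ x k, g x k = s k * x (σ k) + t k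

namespace HasSignedPermForm

variable {g g' : EuclideanSpace ℝ ι ≃ᵢ EuclideanSpace ℝ ι} {σ σ' : Equiv.Perm ι}
  {s s' t t' : ι → ℤ}

theorem one : HasSignedPermForm (1 : EuclideanSpace ℝ ι ≃ᵢ _) 1 1 0 := fun x k ↦ by simp

theorem mul (h : HasSignedPermForm g σ s t) (h' : HasSignedPermForm g' σ' s' t') :
    HasSignedPermForm (g * g') (σ' * σ) (s * s' ∘ σ) (s * t' ∘ σ + t) := fun x k ↦ by
  rw [IsometryEquiv.mul_apply, h, h']
  push_cast [Pi.add_apply, Pi.mul_apply, Function.comp_apply, Equiv.Perm.mul_apply]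
  ring

theorem inv (h : HasSignedPermForm g σ s t) (hs : ∀ k, s k * s k = 1) :
    HasSignedPermForm g⁻¹ σ⁻¹ (s ∘ ⇑σ⁻¹) (-(s * t) ∘ ⇑σ⁻¹) := fun x k ↦ by
  have hx := h (g⁻¹ x) (σ⁻¹ k)
  have hsk : (s (σ⁻¹ k) : ℝ) * s (σ⁻¹ k) = 1 := by exact_mod_cast hs (σ⁻¹ k)
  simp only [IsometryEquiv.apply_inv_self, Equiv.Perm.coe_inv, Equiv.apply_symm_apply] at hx
  push_cast [Pi.mul_apply, Pi.neg_apply, Function.comp_apply]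
  linear_combination -(s (σ⁻¹ k) : ℝ) * hx - (g⁻¹ x k) * hsk

theorem map_add_smul_single [DecidableEq ι] (h : HasSignedPermForm g σ s t)
    (x : EuclideanSpace ℝ ι) (c : ℝ) (i : ι) :
    g (x + c • EuclideanSpace.single i 1) =
      g x + (s (σ⁻¹ i) * c) • EuclideanSpace.single (σ⁻¹ i) 1 := by
  ext k
  rw [PiLp.add_apply, h, h]
  simp only [PiLp.add_apply, PiLp.smul_apply, PiLp.single_apply, smul_eq_mul, mul_ite,
    mul_one, mul_zero, Equiv.Perm.eq_inv_iff_eq]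
  split_ifs with hk
  · simp only [← hk, Equiv.Perm.coe_inv, Equiv.symm_apply_apply]
    ring
  · ring

end HasSignedPermForm

theorem mul_self_eq_one_of_prod_eq_one {s : ι → ℤ} (hs : ∏ k, s k = 1) (k : ι) :
    s k * s k = 1 :=
  Int.isUnit_mul_self (isUnit_of_dvd_one (hs ▸ Finset.dvd_prod_of_mem s (Finset.mem_univ k)))

variable (ι) in
def evenSignedPermGroup : Subgroup (EuclideanSpace ℝ ι ≃ᵢ EuclideanSpace ℝ ι) where
  carrier := {g | ∃ σ s t, ∏ k, s k = 1 ∧ HasSignedPermForm g σ s t}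
  one_mem' := ⟨1, 1, 0, Finset.prod_const_one, .one⟩
  mul_mem' := by
    rintro g g' ⟨σ, s, t, hs, h⟩ ⟨σ', s', t', hs', h'⟩
    refine ⟨_, _, _, ?_, h.mul h'⟩
    rw [Pi.mul_def, Finset.prod_mul_distrib, hs, Function.comp_def, Equiv.prod_comp σ s', hs',
      one_mul]
  inv_mem' := by
    rintro g ⟨σ, s, t, hs, h⟩
    exact ⟨_, _, _, by rwa [Function.comp_def, Equiv.prod_comp σ⁻¹ s],
      h.inv (mul_self_eq_one_of_prod_eq_one hs)⟩

theorem exists_mem_hasSignedPermForm_perm {n : ℕ}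
    {H : Subgroup (EuclideanSpace ℝ (Fin (n + 1)) ≃ᵢ EuclideanSpace ℝ (Fin (n + 1)))}
    (hswap : ∀ i : Fin n, ∃ g ∈ H, HasSignedPermForm g (Equiv.swap i.castSucc i.succ) 1 0)
    (σ : Equiv.Perm (Fin (n + 1))) : ∃ g ∈ H, HasSignedPermForm g σ 1 0 := by
  have hσ : σ ∈ Submonoid.closure (Set.range fun i : Fin n ↦ Equiv.swap i.castSucc i.succ) :=
    Equiv.Perm.mclosure_swap_castSucc_succ n ▸ Submonoid.mem_top σ
  induction hσ using Submonoid.closure_induction with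
  | mem _ hmem =>
    obtain ⟨i, rfl⟩ := hmem
    exact hswap i
  | one => exact ⟨1, one_mem H, .one⟩
  | mul σ τ _ _ hσ hτ =>
    obtain ⟨g, hg, h⟩ := hσ
    obtain ⟨g', hg', h'⟩ := hτ
    exact ⟨g' * g, mul_mem hg' hg, by simpa using h'.mul h⟩

variable {H : Subgroup (EuclideanSpace ℝ ι ≃ᵢ EuclideanSpace ℝ ι)}

theorem exists_mem_hasSignedPermForm_translation [DecidableEq ι]
    (hbasis : ∀ i, ∃ g ∈ H, HasSignedPermForm g 1 1 (Pi.single i 1)) (t : ι → ℤ) :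
    ∃ g ∈ H, HasSignedPermForm g 1 1 t := by
  let A : AddSubgroup (ι → ℤ) :=
    { carrier := {t | ∃ g ∈ H, HasSignedPermForm g 1 1 t}
      zero_mem' := ⟨1, one_mem H, .one⟩
      add_mem' := by
        rintro t t' ⟨g, hg, h⟩ ⟨g', hg', h'⟩
        exact ⟨g' * g, mul_mem hg' hg, by simpa using h'.mul h⟩
      neg_mem' := by
        rintro t ⟨g, hg, h⟩
        exact ⟨g⁻¹, inv_mem hg, by simpa using h.inv fun _ ↦ rfl⟩ }
  change t ∈ A
  rw [← Finset.univ_sum_single t]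
  refine A.sum_mem fun i _ ↦ ?_
  rw [← mul_one (t i), ← smul_eq_mul, Pi.single_smul']
  exact A.zsmul_mem (hbasis i) (t i)

theorem exists_mem_hasSignedPermForm_of_perm_of_sign_of_translation
    (hperm : ∀ σ, ∃ g ∈ H, HasSignedPermForm g σ 1 0)
    (hsign : ∀ s, ∏ k, s k = 1 → ∃ g ∈ H, HasSignedPermForm g 1 s 0)
    (htrans : ∀ t, ∃ g ∈ H, HasSignedPermForm g 1 1 t) (σ : Equiv.Perm ι) {s : ι → ℤ}
    (t : ι → ℤ) (hs : ∏ k, s k = 1) : ∃ g ∈ H, HasSignedPermForm g σ s t := by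
  obtain ⟨gP, hP, fP⟩ := hperm σ
  obtain ⟨gS, hS, fS⟩ := hsign s hs
  obtain ⟨gT, hT, fT⟩ := htrans t
  exact ⟨gT * (gS * gP), mul_mem hT (mul_mem hS hP), by simpa using fT.mul (fS.mul fP)⟩

end SignedPerm

theorem exists_mem_hasSignedPermForm_sign {H : Subgroup (E3 ≃ᵢ E3)}
    (h₁ : ∃ g ∈ H, HasSignedPermForm g 1 ![1, -1, -1] 0)
    (h₂ : ∃ g ∈ H, HasSignedPermForm g 1 ![-1, 1, -1] 0) {s : Fin 3 → ℤ} (hs : ∏ k, s k = 1) :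
    ∃ g ∈ H, HasSignedPermForm g 1 s 0 := by
  have hs' := mul_self_eq_one_of_prod_eq_one hs
  rw [Fin.prod_univ_three] at hs
  have hs₂ : s = ![s 0, s 1, s 0 * s 1] := by
    ext k
    fin_cases k
    · rfl
    · rfl
    · simp only [Fin.reduceFinMk, Matrix.cons_val]
      linear_combination s 0 * s 1 * hs' 2 - s 2 * hs
  obtain ⟨g₁, hg₁, f₁⟩ := h₁
  obtain ⟨g₂, hg₂, f₂⟩ := h₂
  rw [hs₂]
  rcases mul_self_eq_one_iff.mp (hs' 0) with h₀ | h₀ <;>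
    rcases mul_self_eq_one_iff.mp (hs' 1) with h₁ | h₁ <;> rw [h₀, h₁]
  · exact ⟨1, one_mem H, by convert HasSignedPermForm.one using 1; decide⟩
  · exact ⟨g₁, hg₁, by convert f₁ using 1; decide⟩
  · exact ⟨g₂, hg₂, by convert f₂ using 1; decide⟩
  · exact ⟨g₁ * g₂, mul_mem hg₁ hg₂, by convert f₁.mul f₂ using 1 <;> decide⟩

theorem smul_single_inj_of_ne_zero {ι : Type*} [DecidableEq ι] {c c' : ℝ} {i i' : ι}
    (hc : c ≠ 0) (h : c • EuclideanSpace.single i (1 : ℝ) = c' • EuclideanSpace.single i' 1) :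
    i' = i ∧ c' = c := by
  have hi := congr($h i)
  simp only [PiLp.smul_apply, PiLp.single_apply, if_true, smul_eq_mul, mul_one, mul_ite,
    mul_zero] at hi
  by_cases hii' : i = i'
  · subst hii'
    exact ⟨rfl, by simpa using hi.symm⟩
  · exact absurd (by simpa [hii'] using hi) hc

theorem intCast_mul_eq_one_or_eq_neg_one {a : ℤ} (ha : a * a = 1) {ε : ℝ}
    (hε : ε = 1 ∨ ε = -1) : a * ε = 1 ∨ a * ε = -1 := by
  have ha' : (a : ℝ) * a = 1 := by exact_mod_cast ha
  rw [← mul_self_eq_one_iff] at hε ⊢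
  linear_combination ε * ε * ha' + hε

theorem exists_int_mul_self_eq_one_cast_eq {ε : ℝ} (hε : ε = 1 ∨ ε = -1) :
    ∃ e : ℤ, e * e = 1 ∧ (e : ℝ) = ε := by
  rcases hε with rfl | rfl
  exacts [⟨1, rfl, Int.cast_one⟩, ⟨-1, rfl, by simp⟩]

theorem smul_mem_flags {g : E3 ≃ᵢ E3} (hg : g ∈ evenSignedPermGroup (Fin 3))
    {d : E3 × E3 × E3} (hd : d ∈ Flags) : g • d ∈ Flags := by
  obtain ⟨σ, s, t, hs, h⟩ := hg
  obtain ⟨i, j, ε, δ, hij, hε, hδ, hp, hq, hr⟩ := hd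
  have hs' := mul_self_eq_one_of_prod_eq_one hs
  refine ⟨σ⁻¹ i, σ⁻¹ j, s (σ⁻¹ i) * ε, s (σ⁻¹ j) * δ, (σ⁻¹).injective.ne hij,
    intCast_mul_eq_one_or_eq_neg_one (hs' _) hε, intCast_mul_eq_one_or_eq_neg_one (hs' _) hδ,
    fun k ↦ ?_, ?_, ?_⟩
  · obtain ⟨m, hm⟩ := hp (σ k)
    exact ⟨s k * m + t k, by push_cast; rw [← hm]; exact h d.1 k⟩
  · change g d.2.1 = g d.1 + _
    rw [hq, h.map_add_smul_single, mul_div_assoc]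
  · change g d.2.2 = g d.2.1 + _
    rw [hr, h.map_add_smul_single, mul_div_assoc]

def baseFlag : E3 × E3 × E3 :=
  (0, (1 / 2 : ℝ) • EuclideanSpace.single 0 1,
    (1 / 2 : ℝ) • EuclideanSpace.single 0 1 + (1 / 2 : ℝ) • EuclideanSpace.single 1 1)

theorem Fin3.perm_eq_one_of_apply_zero_of_apply_one :
    ∀ σ : Equiv.Perm (Fin 3), σ 0 = 0 → σ 1 = 1 → σ = 1 := by
  decide

theorem Fin3.exists_perm_apply_eq_zero_apply_eq_one :
    ∀ i j : Fin 3, i ≠ j → ∃ σ : Equiv.Perm (Fin 3), σ i = 0 ∧ σ j = 1 := by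
  decide

theorem eq_one_of_smul_baseFlag {g : E3 ≃ᵢ E3} (hg : g ∈ evenSignedPermGroup (Fin 3))
    (hfix : g • baseFlag = baseFlag) : g = 1 := by
  obtain ⟨σ, s, t, hs, h⟩ := hg
  simp only [baseFlag, Prod.smul_mk, IsometryEquiv.smul_def, Prod.mk.injEq] at hfix
  obtain ⟨h₀, h₁, h₂⟩ := hfix
  have e₁ := h.map_add_smul_single 0 (1 / 2) 0
  rw [zero_add, h₀, zero_add, h₁] at e₁
  obtain ⟨hσ₀, hs₀⟩ := smul_single_inj_of_ne_zero (by norm_num) e₁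
  have e₂ := h.map_add_smul_single ((1 / 2 : ℝ) • EuclideanSpace.single 0 1) (1 / 2) 1
  rw [h₁, h₂, add_right_inj] at e₂
  obtain ⟨hσ₁, hs₁⟩ := smul_single_inj_of_ne_zero (by norm_num) e₂
  obtain rfl : σ = 1 := inv_eq_one.mp (Fin3.perm_eq_one_of_apply_zero_of_apply_one _ hσ₀ hσ₁)
  have hs₀' : s 0 = 1 := by simpa using hs₀
  have hs₁' : s 1 = 1 := by simpa using hs₁
  have hs₂' : s 2 = 1 := by simpa [Fin.prod_univ_three, hs₀', hs₁'] using hs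
  have ht : ∀ k, (t k : ℝ) = 0 := fun k ↦ by simpa [h₀] using (h 0 k).symm
  ext x k
  fin_cases k <;> simp [h x, hs₀', hs₁', hs₂', ht]

theorem exists_hasSignedPermForm_smul_baseFlag {d : E3 × E3 × E3} (hd : d ∈ Flags) :
    ∃ (σ : Equiv.Perm (Fin 3)) (s t : Fin 3 → ℤ),
      ∏ k, s k = 1 ∧ ∀ g, HasSignedPermForm g σ s t → g • baseFlag = d := by
  obtain ⟨i, j, ε, δ, hij, hε, hδ, hp, hq, hr⟩ := hd
  obtain ⟨e, he, rfl⟩ := exists_int_mul_self_eq_one_cast_eq hε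
  obtain ⟨e', he', rfl⟩ := exists_int_mul_self_eq_one_cast_eq hδ
  obtain ⟨σ, hσi, hσj⟩ := Fin3.exists_perm_apply_eq_zero_apply_eq_one i j hij
  choose m hm using hp
  refine ⟨σ, fun k ↦ ![e, e', e * e'] (σ k), m, ?_, fun g h ↦ ?_⟩
  · rw [Equiv.prod_comp σ ![e, e', e * e'], Fin.prod_univ_three]
    simp only [Matrix.cons_val_zero, Matrix.cons_val_one, Matrix.cons_val]
    linear_combination e * e * he' + he
  have hi : σ⁻¹ 0 = i := by rw [Equiv.Perm.inv_eq_iff_eq, hσi]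
  have hj : σ⁻¹ 1 = j := by rw [Equiv.Perm.inv_eq_iff_eq, hσj]
  have h₀ : g 0 = d.1 := by
    ext k
    simp [h 0 k, hm]
  have h₁ : g ((1 / 2 : ℝ) • EuclideanSpace.single 0 1) = d.2.1 := by
    simpa [hi, hσi, h₀, hq, div_eq_mul_inv] using h.map_add_smul_single 0 (1 / 2) 0
  have h₂ : g ((1 / 2 : ℝ) • EuclideanSpace.single 0 1 + (1 / 2 : ℝ) • EuclideanSpace.single 1 1)
      = d.2.2 := by
    have e₂ := h.map_add_smul_single ((1 / 2 : ℝ) • EuclideanSpace.single 0 1) (1 / 2) 1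
    rw [h₁] at e₂
    simpa [hj, hσj, hr, div_eq_mul_inv] using e₂
  exact Prod.ext h₀ (Prod.ext h₁ h₂)

section Generators

variable {T0 T1 T2 T3 : E3 ≃ᵢ E3}

theorem hasSignedPermForm_T0_mul_T3 (hT0 : ∀ x : E3, T0 x = pt (1 - x 0) (x 1) (x 2))
    (hT3 : ∀ x : E3, T3 x = pt (x 0) (x 1) (-(x 2))) :
    HasSignedPermForm (T0 * T3) 1 ![-1, 1, -1] ![1, 0, 0] := fun x k ↦ by
  fin_cases k <;> simp [hT0, hT3, pt, sub_eq_neg_add]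

theorem hasSignedPermForm_T1 (hT1 : ∀ x : E3, T1 x = pt (x 1) (x 0) (x 2)) :
    HasSignedPermForm T1 (Equiv.swap 0 1) 1 0 := fun x k ↦ by
  fin_cases k <;> simp [hT1, pt, Equiv.swap_apply_def]

theorem hasSignedPermForm_T2 (hT2 : ∀ x : E3, T2 x = pt (x 0) (x 2) (x 1)) :
    HasSignedPermForm T2 (Equiv.swap 1 2) 1 0 := fun x k ↦ by
  fin_cases k <;> simp [hT2, pt, Equiv.swap_apply_def]

theorem hasSignedPermForm_T3_mul_T2_mul_T3 (hT2 : ∀ x : E3, T2 x = pt (x 0) (x 2) (x 1))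
    (hT3 : ∀ x : E3, T3 x = pt (x 0) (x 1) (-(x 2))) :
    HasSignedPermForm (T3 * T2 * T3) (Equiv.swap 1 2) ![1, -1, -1] 0 := fun x k ↦ by
  fin_cases k <;> simp [hT2, hT3, pt, Equiv.swap_apply_def]

theorem closure_le_evenSignedPermGroup (hT0 : ∀ x : E3, T0 x = pt (1 - x 0) (x 1) (x 2))
    (hT1 : ∀ x : E3, T1 x = pt (x 1) (x 0) (x 2))
    (hT2 : ∀ x : E3, T2 x = pt (x 0) (x 2) (x 1))
    (hT3 : ∀ x : E3, T3 x = pt (x 0) (x 1) (-(x 2))) :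
    Subgroup.closure {T0 * T3, T1, T2, T3 * T2 * T3} ≤ evenSignedPermGroup (Fin 3) := by
  rw [Subgroup.closure_le]
  rintro g (rfl | rfl | rfl | rfl)
  exacts [⟨_, _, _, by decide, hasSignedPermForm_T0_mul_T3 hT0 hT3⟩,
    ⟨_, _, _, by decide, hasSignedPermForm_T1 hT1⟩,
    ⟨_, _, _, by decide, hasSignedPermForm_T2 hT2⟩,
    ⟨_, _, _, by decide, hasSignedPermForm_T3_mul_T2_mul_T3 hT2 hT3⟩]

theorem exists_mem_closure_hasSignedPermForm
    (hT0 : ∀ x : E3, T0 x = pt (1 - x 0) (x 1) (x 2))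
    (hT1 : ∀ x : E3, T1 x = pt (x 1) (x 0) (x 2))
    (hT2 : ∀ x : E3, T2 x = pt (x 0) (x 2) (x 1))
    (hT3 : ∀ x : E3, T3 x = pt (x 0) (x 1) (-(x 2))) (σ : Equiv.Perm (Fin 3)) {s : Fin 3 → ℤ}
    (t : Fin 3 → ℤ) (hs : ∏ k, s k = 1) :
    ∃ g ∈ Subgroup.closure {T0 * T3, T1, T2, T3 * T2 * T3}, HasSignedPermForm g σ s t := by
  set H := Subgroup.closure {T0 * T3, T1, T2, T3 * T2 * T3}
  have m₀ : T0 * T3 ∈ H := Subgroup.subset_closure (by simp)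
  have m₁ : T1 ∈ H := Subgroup.subset_closure (by simp)
  have m₂ : T2 ∈ H := Subgroup.subset_closure (by simp)
  have m₃ : T3 * T2 * T3 ∈ H := Subgroup.subset_closure (by simp)
  have f₀ := hasSignedPermForm_T0_mul_T3 hT0 hT3
  have f₁ := hasSignedPermForm_T1 hT1
  have f₂ := hasSignedPermForm_T2 hT2
  have f₃ := hasSignedPermForm_T3_mul_T2_mul_T3 hT2 hT3
  have fρ : HasSignedPermForm (T2 * (T3 * T2 * T3)) 1 ![1, -1, -1] 0 := by
    convert f₂.mul f₃ using 1 <;> decide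
  have fρ' : HasSignedPermForm (T1 * (T2 * (T3 * T2 * T3)) * T1) 1 ![-1, 1, -1] 0 := by
    convert (f₁.mul fρ).mul f₁ using 1 <;> decide
  have mρ' : T1 * (T2 * (T3 * T2 * T3)) * T1 ∈ H := mul_mem (mul_mem m₁ (mul_mem m₂ m₃)) m₁
  have fτ₀ : HasSignedPermForm (T0 * T3 * (T1 * (T2 * (T3 * T2 * T3)) * T1)) 1 1
      (Pi.single 0 1) := by
    convert f₀.mul fρ' using 1 <;> decide
  have mτ₀ := mul_mem m₀ mρ'
  refine exists_mem_hasSignedPermForm_of_perm_of_sign_of_translation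
    (exists_mem_hasSignedPermForm_perm fun i ↦ ?_)
    (fun s hs ↦ exists_mem_hasSignedPermForm_sign ⟨_, mul_mem m₂ m₃, fρ⟩ ⟨_, mρ', fρ'⟩ hs)
    (exists_mem_hasSignedPermForm_translation fun i ↦ ?_) σ t hs
  · fin_cases i
    exacts [⟨T1, m₁, f₁⟩, ⟨T2, m₂, f₂⟩]
  · fin_cases i
    · exact ⟨_, mτ₀, fτ₀⟩
    · exact ⟨_, mul_mem (mul_mem m₁ mτ₀) m₁, by convert (f₁.mul fτ₀).mul f₁ using 1 <;> decide⟩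
    · exact ⟨_, mul_mem (mul_mem m₂ (mul_mem (mul_mem m₁ mτ₀) m₁)) m₂, by
        convert (f₂.mul ((f₁.mul fτ₀).mul f₁)).mul f₂ using 1 <;> decide⟩

end Generators

end CubicTessellation

open CubicTessellation

theorem H_simply_transitive_on_flags
    (T0 T1 T2 T3 : E3 ≃ᵢ E3)
    (hT0 : ∀ x : E3, T0 x = pt (1 - x 0) (x 1) (x 2))
    (hT1 : ∀ x : E3, T1 x = pt (x 1) (x 0) (x 2))
    (hT2 : ∀ x : E3, T2 x = pt (x 0) (x 2) (x 1))
    (hT3 : ∀ x : E3, T3 x = pt (x 0) (x 1) (-(x 2))) :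
    (∀ g ∈ Subgroup.closure {T0 * T3, T1, T2, T3 * T2 * T3},
      ∀ d ∈ Flags, (g d.1, g d.2.1, g d.2.2) ∈ Flags) ∧
    (∀ d ∈ Flags, ∀ d' ∈ Flags,
      ∃! g : E3 ≃ᵢ E3, g ∈ Subgroup.closure {T0 * T3, T1, T2, T3 * T2 * T3} ∧
        (g d.1, g d.2.1, g d.2.2) = d') := by
  have hle := closure_le_evenSignedPermGroup hT0 hT1 hT2 hT3
  refine ⟨fun g hg d hd ↦ smul_mem_flags (hle hg) hd, fun d hd d' hd' ↦ ?_⟩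
  refine Subgroup.existsUnique_smul_eq_of_forall_mem_orbit (fun d hd ↦ ?_)
    (fun g hg ↦ eq_one_of_smul_baseFlag (hle hg)) hd hd'
  obtain ⟨σ, s, t, hs, hmap⟩ := exists_hasSignedPermForm_smul_baseFlag hd
  obtain ⟨g, hg, h⟩ := exists_mem_closure_hasSignedPermForm hT0 hT1 hT2 hT3 σ t hs
  exact ⟨g, hg, hmap g h⟩
end
end

section
/- Fix a real number a ≠ 0 and let G be the subgroup of isometries of ℝ³ generated by the four maps R₀(x,y,z) = (−x + a, y, −z + a), R₁(x,y,z) = (y, x, z), R₂(x,y,z) = (z, y, x), R̂₂(x,y,z) = (x, −y, z). Then the orbit of the origin under G (the vertex set of the regular complex K₁(1,2)) equals the face-centered cubic lattice Λ_{(a,a,0)} = {(am₁, am₂, am₃) : m₁, m₂, m₃ ∈ ℤ, m₁ + m₂ + m₃ even}. -/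
/- STATEMENT 9: For a ≠ 0, the orbit of the origin under the group generated by
R₀(x,y,z) = (−x + a, y, −z + a), R₁(x,y,z) = (y, x, z), R₂(x,y,z) = (z, y, x),
R̂₂(x,y,z) = (x, −y, z) (the vertex set of K₁(1,2)) is the face-centered cubic lattice
Λ_{(a,a,0)} = {(am₁, am₂, am₃) : mᵢ ∈ ℤ, m₁ + m₂ + m₃ even}. -/

noncomputable section

/-!
Every generator is an involution mapping the lattice into itself, so the whole group preserves
the lattice, and the orbit of the origin lies in it. Conversely, `R₀` composed with the
reflections `x ↦ -x` and `z ↦ -z` (both words in `R₁, R₂, R̂₂`) is the translation by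
`(a, 0, a)`; conjugating by the coordinate swaps `R₁, R₂` gives the translations by `(0, a, a)`
and `(a, a, 0)`, and these three vectors generate the lattice.
-/

namespace IsometryEquiv

section Stabilizer

variable {α : Type*} [PseudoEMetricSpace α]

def setStabilizer (S : Set α) : Subgroup (α ≃ᵢ α) where
  carrier := {g | ∀ x, g x ∈ S ↔ x ∈ S}
  mul_mem' hg hh x := (hg _).trans (hh x)
  one_mem' _ := Iff.rfl
  inv_mem' {g} hg x := by rw [← hg, apply_inv_self]

lemma mem_setStabilizer_of_involutive {S : Set α} {g : α ≃ᵢ α} (hg : Function.Involutive g)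
    (hS : Set.MapsTo g S S) : g ∈ setStabilizer S :=
  fun x => ⟨fun hx => hg x ▸ hS hx, fun hx => hS hx⟩

end Stabilizer

section Translations

variable {E : Type*} [AddGroup E] [PseudoEMetricSpace E] [IsIsometricVAdd E E]

lemma addLeft_add (u v : E) : addLeft (u + v) = addLeft u * addLeft v :=
  ext fun x => add_assoc u v x

lemma addLeft_zero : addLeft (0 : E) = 1 :=
  ext fun x => zero_add x

lemma addLeft_neg (v : E) : addLeft (-v) = (addLeft v)⁻¹ :=
  eq_inv_of_mul_eq_one_left (by rw [← addLeft_add, neg_add_cancel, addLeft_zero])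

def translationVectors (G : Subgroup (E ≃ᵢ E)) : AddSubgroup E where
  carrier := {v | addLeft v ∈ G}
  add_mem' {u v} hu hv := by
    change addLeft (u + v) ∈ G
    rw [addLeft_add]
    exact mul_mem hu hv
  zero_mem' := by
    change addLeft 0 ∈ G
    rw [addLeft_zero]
    exact one_mem G
  neg_mem' {v} hv := by
    change addLeft (-v) ∈ G
    rw [addLeft_neg]
    exact inv_mem hv

lemma exists_apply_zero_eq_of_mem_translationVectors {G : Subgroup (E ≃ᵢ E)} {v : E}
    (hv : v ∈ translationVectors G) : ∃ g ∈ G, g 0 = v :=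
  ⟨addLeft v, hv, add_zero v⟩

lemma map_mem_translationVectors {G : Subgroup (E ≃ᵢ E)} {σ : E ≃ᵢ E} (hσ : σ ∈ G)
    (hσ_add : ∀ x y, σ (x + y) = σ x + σ y) {v : E} (hv : v ∈ translationVectors G) :
    σ v ∈ translationVectors G := by
  have hconj : σ * addLeft v * σ⁻¹ = addLeft (σ v) :=
    ext fun x => by simp [mul_apply, hσ_add]
  change addLeft (σ v) ∈ G
  exact hconj ▸ mul_mem (mul_mem hσ hv) (inv_mem hσ)

end Translations

end IsometryEquiv

open IsometryEquiv

@[simp] lemma pt_apply_zero (x y z : ℝ) : pt x y z 0 = x := rfl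
@[simp] lemma pt_apply_one (x y z : ℝ) : pt x y z 1 = y := rfl
@[simp] lemma pt_apply_two (x y z : ℝ) : pt x y z 2 = z := rfl

def fccLattice (a : ℝ) : Set E3 :=
  {y | ∃ m1 m2 m3 : ℤ, y 0 = a * m1 ∧ y 1 = a * m2 ∧ y 2 = a * m3 ∧ Even (m1 + m2 + m3)}

lemma zero_mem_fccLattice (a : ℝ) : 0 ∈ fccLattice a :=
  ⟨0, 0, 0, by simp, by simp, by simp, by simp⟩

lemma fccLattice_subset {a : ℝ} {H : AddSubgroup E3} (h₁ : pt 0 a a ∈ H) (h₂ : pt a 0 a ∈ H)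
    (h₃ : pt a a 0 ∈ H) : fccLattice a ⊆ H := by
  rintro y ⟨m1, m2, m3, hy0, hy1, hy2, k, hk⟩
  have hkR : (m1 : ℝ) + m2 + m3 = k + k := by exact_mod_cast hk
  have hy : y = (k - m1) • pt 0 a a + (k - m2) • pt a 0 a + (k - m3) • pt a a 0 := by
    ext i
    fin_cases i <;>
      simp only [Fin.isValue, Fin.zero_eta, Fin.mk_one, Fin.reduceFinMk, hy0, hy1, hy2,
        PiLp.add_apply, PiLp.smul_apply, pt_apply_zero, pt_apply_one, pt_apply_two, zsmul_eq_mul,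
        Int.cast_sub, smul_zero, zero_add, add_zero] <;>
      linear_combination a * hkR
  rw [hy]
  exact add_mem (add_mem (zsmul_mem h₁ _) (zsmul_mem h₂ _)) (zsmul_mem h₃ _)

section Generators

variable {a : ℝ} {R0 R1 R2 R2' : E3 ≃ᵢ E3}

lemma R0_mem_setStabilizer (hR0 : ∀ x : E3, R0 x = pt (-(x 0) + a) (x 1) (-(x 2) + a)) :
    R0 ∈ setStabilizer (fccLattice a) := by
  refine mem_setStabilizer_of_involutive (fun x => ?_) ?_
  · ext i; fin_cases i <;> simp [hR0]
  · rintro y ⟨m1, m2, m3, h0, h1, h2, he⟩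
    refine ⟨1 - m1, m2, 1 - m3, ?_, ?_, ?_, ?_⟩
    · simp only [hR0, h0, pt_apply_zero, Int.cast_sub, Int.cast_one]; ring
    · simp [hR0, h1]
    · simp only [hR0, h2, pt_apply_two, Int.cast_sub, Int.cast_one]; ring
    · rw [Int.even_iff] at he ⊢; omega

lemma R1_mem_setStabilizer (hR1 : ∀ x : E3, R1 x = pt (x 1) (x 0) (x 2)) :
    R1 ∈ setStabilizer (fccLattice a) := by
  refine mem_setStabilizer_of_involutive (fun x => ?_) ?_
  · ext i; fin_cases i <;> simp [hR1]
  · rintro y ⟨m1, m2, m3, h0, h1, h2, he⟩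
    exact ⟨m2, m1, m3, by simp [hR1, h1], by simp [hR1, h0], by simp [hR1, h2],
      by convert he using 1; ring⟩

lemma R2_mem_setStabilizer (hR2 : ∀ x : E3, R2 x = pt (x 2) (x 1) (x 0)) :
    R2 ∈ setStabilizer (fccLattice a) := by
  refine mem_setStabilizer_of_involutive (fun x => ?_) ?_
  · ext i; fin_cases i <;> simp [hR2]
  · rintro y ⟨m1, m2, m3, h0, h1, h2, he⟩
    exact ⟨m3, m2, m1, by simp [hR2, h2], by simp [hR2, h1], by simp [hR2, h0],
      by convert he using 1; ring⟩

lemma R2'_mem_setStabilizer (hR2' : ∀ x : E3, R2' x = pt (x 0) (-(x 1)) (x 2)) :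
    R2' ∈ setStabilizer (fccLattice a) := by
  refine mem_setStabilizer_of_involutive (fun x => ?_) ?_
  · ext i; fin_cases i <;> simp [hR2']
  · rintro y ⟨m1, m2, m3, h0, h1, h2, he⟩
    refine ⟨m1, -m2, m3, by simp [hR2', h0], by simp [hR2', h1], by simp [hR2', h2], ?_⟩
    rw [Int.even_iff] at he ⊢; omega

lemma R0_mul_reflections_eq_addLeft (hR0 : ∀ x : E3, R0 x = pt (-(x 0) + a) (x 1) (-(x 2) + a))
    (hR1 : ∀ x : E3, R1 x = pt (x 1) (x 0) (x 2)) (hR2 : ∀ x : E3, R2 x = pt (x 2) (x 1) (x 0))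
    (hR2' : ∀ x : E3, R2' x = pt (x 0) (-(x 1)) (x 2)) :
    R0 * (R1 * R2' * R1) * (R2 * (R1 * R2' * R1) * R2) = addLeft (pt a 0 a) := by
  ext x i
  fin_cases i <;>
    simp only [Fin.isValue, Fin.zero_eta, Fin.mk_one, Fin.reduceFinMk, mul_apply, hR0, hR1, hR2,
      hR2', addLeft_apply, PiLp.add_apply, pt_apply_zero, pt_apply_one, pt_apply_two, neg_neg,
      zero_add] <;>
    ring

lemma R1_map_add (hR1 : ∀ x : E3, R1 x = pt (x 1) (x 0) (x 2)) (x y : E3) :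
    R1 (x + y) = R1 x + R1 y := by
  ext i; fin_cases i <;> simp [hR1]

lemma R2_map_add (hR2 : ∀ x : E3, R2 x = pt (x 2) (x 1) (x 0)) (x y : E3) :
    R2 (x + y) = R2 x + R2 y := by
  ext i; fin_cases i <;> simp [hR2]

end Generators

theorem vertex_set_K1_12_general
    (a : ℝ)
    (R0 R1 R2 R2' : E3 ≃ᵢ E3)
    (hR0 : ∀ x : E3, R0 x = pt (-(x 0) + a) (x 1) (-(x 2) + a))
    (hR1 : ∀ x : E3, R1 x = pt (x 1) (x 0) (x 2))
    (hR2 : ∀ x : E3, R2 x = pt (x 2) (x 1) (x 0))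
    (hR2' : ∀ x : E3, R2' x = pt (x 0) (-(x 1)) (x 2)) :
    {y : E3 | ∃ g ∈ Subgroup.closure {R0, R1, R2, R2'}, g 0 = y} =
      {y : E3 | ∃ m1 m2 m3 : ℤ,
        y 0 = a * m1 ∧ y 1 = a * m2 ∧ y 2 = a * m3 ∧ Even (m1 + m2 + m3)} := by
  set G := Subgroup.closure {R0, R1, R2, R2'}
  have hgen : {R0, R1, R2, R2'} ⊆ (G : Set (E3 ≃ᵢ E3)) := Subgroup.subset_closure
  simp only [Set.insert_subset_iff, Set.singleton_subset_iff, SetLike.mem_coe] at hgen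
  obtain ⟨hG0, hG1, hG2, hG2'⟩ := hgen
  apply Set.Subset.antisymm
  · have hG : G ≤ setStabilizer (fccLattice a) := (Subgroup.closure_le _).2 <| by
      simp only [Set.insert_subset_iff, Set.singleton_subset_iff, SetLike.mem_coe]
      exact ⟨R0_mem_setStabilizer hR0, R1_mem_setStabilizer hR1, R2_mem_setStabilizer hR2,
        R2'_mem_setStabilizer hR2'⟩
    rintro _ ⟨g, hg, rfl⟩
    exact (hG hg 0).2 (zero_mem_fccLattice a)
  · have h₂ : pt a 0 a ∈ translationVectors G := by
      change addLeft (pt a 0 a) ∈ G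
      rw [← R0_mul_reflections_eq_addLeft hR0 hR1 hR2 hR2']
      exact mul_mem (mul_mem hG0 (mul_mem (mul_mem hG1 hG2') hG1))
        (mul_mem (mul_mem hG2 (mul_mem (mul_mem hG1 hG2') hG1)) hG2)
    have h₁ : pt 0 a a ∈ translationVectors G := by
      simpa [hR1] using map_mem_translationVectors hG1 (R1_map_add hR1) h₂
    have h₃ : pt a a 0 ∈ translationVectors G := by
      simpa [hR2] using map_mem_translationVectors hG2 (R2_map_add hR2) h₁
    exact fun y hy => exists_apply_zero_eq_of_mem_translationVectors (fccLattice_subset h₁ h₂ h₃ hy)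

theorem vertex_set_K1_12
    (a : ℝ) (ha : a ≠ 0)
    (R0 R1 R2 R2' : E3 ≃ᵢ E3)
    (hR0 : ∀ x : E3, R0 x = pt (-(x 0) + a) (x 1) (-(x 2) + a))
    (hR1 : ∀ x : E3, R1 x = pt (x 1) (x 0) (x 2))
    (hR2 : ∀ x : E3, R2 x = pt (x 2) (x 1) (x 0))
    (hR2' : ∀ x : E3, R2' x = pt (x 0) (-(x 1)) (x 2)) :
    {y : E3 | ∃ g ∈ Subgroup.closure {R0, R1, R2, R2'}, g 0 = y} =
      {y : E3 | ∃ m1 m2 m3 : ℤ,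
        y 0 = a * m1 ∧ y 1 = a * m2 ∧ y 2 = a * m3 ∧ Even (m1 + m2 + m3)} :=
  vertex_set_K1_12_general a R0 R1 R2 R2' hR0 hR1 hR2 hR2'
end
end
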